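/- arXiv:1607.08794 — 9 statements merged into one kernel-verified Lean document; each statement's English description precedes it below -/
import Mathlib

section
/- Let $(\lambda_n)_{n\ge2}$ be positive reals with $\sum_{n\ge2} \lambda_n^{-1} < \infty$, and set $A_n = \sum_{i=n+1}^\infty \lambda_i^{-1}$. If $\lambda_n/\lambda_{n+1} \to \alpha$ for some $\alpha \in [0,1)$ as $n \to \infty$, then $\lambda_{n+1} A_n \to 1/(1-\alpha)$ as $n \to \infty$. -/
open Filter Topology

theorem death_rate_tail_ratio (lam : ℕ → ℝ) (hpos : ∀ n, 0 < lam n)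
    (hsum : Summable fun n => (lam n)⁻¹)
    (A : ℕ → ℝ) (hA : ∀ n, A n = ∑' i : ℕ, (lam (n + 1 + i))⁻¹)
    (α : ℝ) (hα : α ∈ Set.Ico (0 : ℝ) 1)
    (hratio : Tendsto (fun n => lam n / lam (n + 1)) atTop (𝓝 α)) :
    Tendsto (fun n => lam (n + 1) * A n) atTop (𝓝 (1 / (1 - α))) := by
  obtain ⟨hα0, hα1⟩ := hα
  set r : ℕ → ℕ → ℝ := fun n i => lam (n + 1) / lam (n + 1 + i) with hr
  set β : ℝ := (1 + α) / 2 with hβ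
  have hβ1 : β < 1 := by rw [hβ]; linarith
  have hβα : α < β := by rw [hβ]; linarith
  have hβ0 : 0 ≤ β := by rw [hβ]; linarith
  -- eventual bound on the ratios
  have hev : ∀ᶠ m in atTop, lam m / lam (m + 1) ≤ β := by
    filter_upwards [hratio.eventually_le_const hβα] with m hm using hm
  obtain ⟨N, hN⟩ := hev.exists_forall_of_atTop
  -- pointwise convergence r n i → α ^ i
  have hpt : ∀ i, Tendsto (fun n => r n i) atTop (𝓝 (α ^ i)) := by
    intro i
    induction i with
    | zero => simp [hr, div_self (hpos _).ne']
    | succ i ih =>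
      have key : ∀ n, r n (i + 1) = r n i * (lam (n + 1 + i) / lam (n + 1 + i + 1)) := by
        intro n
        rw [hr]
        field_simp
        ring_nf
        rw [mul_assoc, mul_inv_cancel₀ (hpos _).ne', mul_one]
      have h2 : Tendsto (fun n => lam (n + 1 + i) / lam (n + 1 + i + 1)) atTop (𝓝 α) := by
        have := (tendsto_add_atTop_iff_nat (1 + i)).mpr hratio
        have heq' : ∀ n : ℕ, n + (1 + i) = n + 1 + i := fun n => by omega
        simpa [heq'] using this
      have := ih.mul h2
      simp only [key]
      simpa [pow_succ] using this
  -- eventual domination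
  have hbd : ∀ᶠ n in atTop, ∀ i, ‖r n i‖ ≤ β ^ i := by
    filter_upwards [eventually_ge_atTop N] with n hn i
    have hrpos : ∀ j, 0 < r n j := fun j => div_pos (hpos _) (hpos _)
    rw [Real.norm_eq_abs, abs_of_pos (hrpos i)]
    induction i with
    | zero => simp [hr, div_self (hpos _).ne']
    | succ i ih =>
      have key : r n (i + 1) = r n i * (lam (n + 1 + i) / lam (n + 1 + i + 1)) := by
        rw [hr]; field_simp; ring_nf
        rw [mul_assoc, mul_inv_cancel₀ (hpos _).ne', mul_one]
      rw [key, pow_succ]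
      have h1 : lam (n + 1 + i) / lam (n + 1 + i + 1) ≤ β := hN _ (by omega)
      exact mul_le_mul ih h1 (le_of_lt (div_pos (hpos _) (hpos _))) (pow_nonneg hβ0 i)
  have hβsum : Summable fun i => β ^ i := summable_geometric_of_lt_one hβ0 hβ1
  have main : Tendsto (fun n => ∑' i, r n i) atTop (𝓝 (∑' i, α ^ i)) :=
    tendsto_tsum_of_dominated_convergence hβsum hpt hbd
  have hgeo : (∑' i : ℕ, α ^ i) = 1 / (1 - α) := by
    rw [tsum_geometric_of_lt_one hα0 hα1, one_div]
  have heq : ∀ n, lam (n + 1) * A n = ∑' i, r n i := by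
    intro n
    rw [hA n, ← tsum_mul_left]
    exact tsum_congr fun i => (div_eq_mul_inv _ _).symm
  rw [← hgeo]
  simpa only [heq] using main
end

section
/- Let $(\lambda_n)_{n\ge2}$ be positive reals with $\sum_{n\ge2} \lambda_n^{-1} < \infty$ and $A_n = \sum_{i=n+1}^\infty \lambda_i^{-1}$. If $\lambda_{n+1} A_n \to 1/(1-\alpha)$ for some $\alpha \in [0,1)$, then for every fixed $i \ge 1$, $(\lambda_{n+i} A_n)^{-1} \to \alpha^{i-1}(1-\alpha)$ as $n \to \infty$. -/
open Filter Topology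

theorem lambda_shift_tail_limit (lam : ℕ → ℝ) (hpos : ∀ n, 0 < lam n)
    (hsum : Summable fun n => (lam n)⁻¹)
    (A : ℕ → ℝ) (hA : ∀ n, A n = ∑' i : ℕ, (lam (n + 1 + i))⁻¹)
    (α : ℝ) (hα : α ∈ Set.Ico (0 : ℝ) 1)
    (hratio : Tendsto (fun n => lam n / lam (n + 1)) atTop (𝓝 α))
    (hconv : Tendsto (fun n => lam (n + 1) * A n) atTop (𝓝 (1 / (1 - α)))) :
    ∀ i : ℕ, 1 ≤ i →
      Tendsto (fun n => (lam (n + i) * A n)⁻¹) atTop (𝓝 (α ^ (i - 1) * (1 - α))) := by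
  have hα1 : (0:ℝ) < 1 - α := by linarith [hα.2]
  have hne : (1:ℝ)/(1-α) ≠ 0 := one_div_ne_zero (ne_of_gt hα1)
  intro i hi
  induction i with
  | zero => omega
  | succ i ih =>
    rcases Nat.lt_or_ge i 1 with h | h
    · -- i = 0, base case
      interval_cases i
      have := hconv.inv₀ hne
      simpa using this
    · -- inductive step
      have ihi := ih h
      have hshift : Tendsto (fun n => lam (n + i) / lam (n + i + 1)) atTop (𝓝 α) := by
        have := hratio.comp (tendsto_add_atTop_nat i)
        exact this
      have hmul := ihi.mul hshift
      have heq : (fun n => (lam (n + i) * A n)⁻¹ * (lam (n + i) / lam (n + i + 1)))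
          = fun n => (lam (n + (i + 1)) * A n)⁻¹ := by
        funext n
        have h1 : lam (n + i) ≠ 0 := ne_of_gt (hpos _)
        have h2 : lam (n + i + 1) ≠ 0 := ne_of_gt (hpos _)
        have : n + (i + 1) = n + i + 1 := by omega
        rw [this]
        have key : ∀ a b c : ℝ, a ≠ 0 → (a * b)⁻¹ * (a / c) = (c * b)⁻¹ := by
          intro a b c ha
          rw [mul_inv, mul_inv, div_eq_mul_inv]
          calc a⁻¹ * b⁻¹ * (a * c⁻¹) = (a⁻¹ * a) * (c⁻¹ * b⁻¹) := by ring
            _ = c⁻¹ * b⁻¹ := by rw [inv_mul_cancel₀ ha, one_mul]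
        exact key _ _ _ h1
      rw [heq] at hmul
      obtain ⟨j, rfl⟩ : ∃ j, i = j + 1 := ⟨i - 1, (Nat.succ_pred_eq_of_pos h).symm⟩
      have hpow : α ^ (j + 1 - 1) * (1 - α) * α = α ^ (j + 1 + 1 - 1) * (1 - α) := by
        simp [pow_succ]
        ring
      rw [hpow] at hmul
      exact hmul
end

section
/- Let $(\lambda_n)_{n\ge2}$ be positive reals with $\sum_{n\ge2}\lambda_n^{-1}<\infty$ and $A_n=\sum_{i=n+1}^\infty \lambda_i^{-1}$. If $\lambda_n/\lambda_{n+1}\to\alpha\in[0,1)$ as $n\to\infty$, then $A_{n+1}/A_n \to \alpha$ as $n \to \infty$. -/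
/-!
Put `a n = λₙ⁻¹`, so that `a (k + 1) / a k → α`, and let `T n = ∑_{i ≥ n} a i`, so that
`Aₙ = T (n + 1)`. If `c · a k ≤ a (k + 1) ≤ d · a k` for all `k ≥ n`, summing over `k ≥ n` gives
`c · T n ≤ T (n + 1) ≤ d · T n`: the ratio of consecutive tails is trapped between any eventual
bounds of the ratio of consecutive terms, hence has the same limit.
-/

open Filter Topology

noncomputable def tailSum (f : ℕ → ℝ) (n : ℕ) : ℝ := ∑' i, f (n + i)

section TailSum

variable {f : ℕ → ℝ}

lemma Summable.tail (hf : Summable f) (n : ℕ) : Summable fun i => f (n + i) :=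
  hf.comp_injective (add_right_injective n)

lemma tailSum_pos (hpos : ∀ k, 0 < f k) (hf : Summable f) (n : ℕ) : 0 < tailSum f n :=
  (hf.tail n).tsum_pos (fun _ => (hpos _).le) 0 (hpos _)

lemma tailSum_succ_le_mul (hf : Summable f) {n : ℕ} {d : ℝ}
    (h : ∀ k ≥ n, f (k + 1) ≤ d * f k) : tailSum f (n + 1) ≤ d * tailSum f n := by
  rw [tailSum, tailSum, ← tsum_mul_left]
  refine (hf.tail (n + 1)).tsum_le_tsum (fun i => ?_) ((hf.tail n).mul_left d)
  simpa only [add_right_comm n 1 i] using h (n + i) (Nat.le_add_right n i)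

lemma mul_tailSum_le_succ (hf : Summable f) {n : ℕ} {c : ℝ}
    (h : ∀ k ≥ n, c * f k ≤ f (k + 1)) : c * tailSum f n ≤ tailSum f (n + 1) := by
  rw [tailSum, tailSum, ← tsum_mul_left]
  refine ((hf.tail n).mul_left c).tsum_le_tsum (fun i => ?_) (hf.tail (n + 1))
  simpa only [add_right_comm n 1 i] using h (n + i) (Nat.le_add_right n i)

lemma eventually_tailSum_ratio_le (hpos : ∀ k, 0 < f k) (hf : Summable f) {d : ℝ}
    (h : ∀ᶠ k in atTop, f (k + 1) / f k ≤ d) :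
    ∀ᶠ n in atTop, tailSum f (n + 1) / tailSum f n ≤ d := by
  obtain ⟨N, hN⟩ := eventually_atTop.1 h
  refine eventually_atTop.2 ⟨N, fun n hn => ?_⟩
  rw [div_le_iff₀ (tailSum_pos hpos hf n)]
  exact tailSum_succ_le_mul hf fun k hk => (div_le_iff₀ (hpos k)).1 (hN k (hn.trans hk))

lemma eventually_le_tailSum_ratio (hpos : ∀ k, 0 < f k) (hf : Summable f) {c : ℝ}
    (h : ∀ᶠ k in atTop, c ≤ f (k + 1) / f k) :
    ∀ᶠ n in atTop, c ≤ tailSum f (n + 1) / tailSum f n := by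
  obtain ⟨N, hN⟩ := eventually_atTop.1 h
  refine eventually_atTop.2 ⟨N, fun n hn => ?_⟩
  rw [le_div_iff₀ (tailSum_pos hpos hf n)]
  exact mul_tailSum_le_succ hf fun k hk => (le_div_iff₀ (hpos k)).1 (hN k (hn.trans hk))

lemma tendsto_tailSum_ratio (hpos : ∀ k, 0 < f k) (hf : Summable f) {α : ℝ}
    (h : Tendsto (fun k => f (k + 1) / f k) atTop (𝓝 α)) :
    Tendsto (fun n => tailSum f (n + 1) / tailSum f n) atTop (𝓝 α) := by
  refine tendsto_order.2 ⟨fun c hc => ?_, fun d hd => ?_⟩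
  · obtain ⟨c', hcc', hc'⟩ := exists_between hc
    have hle := eventually_le_tailSum_ratio hpos hf
      (((tendsto_order.1 h).1 c' hc').mono fun _ => le_of_lt)
    exact hle.mono fun _ => hcc'.trans_le
  · obtain ⟨d', hd', hd'd⟩ := exists_between hd
    have hle := eventually_tailSum_ratio_le hpos hf
      (((tendsto_order.1 h).2 d' hd').mono fun _ => le_of_lt)
    exact hle.mono fun _ => (·.trans_lt hd'd)

end TailSum

theorem tail_sum_ratio_limit_general (lam : ℕ → ℝ) (hpos : ∀ n, 0 < lam n)
    (hsum : Summable fun n => (lam n)⁻¹)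
    (A : ℕ → ℝ) (hA : ∀ n, A n = ∑' i : ℕ, (lam (n + 1 + i))⁻¹)
    (α : ℝ)
    (hratio : Tendsto (fun n => lam n / lam (n + 1)) atTop (𝓝 α)) :
    Tendsto (fun n => A (n + 1) / A n) atTop (𝓝 α) := by
  have hinv_ratio : Tendsto (fun n => (lam (n + 1))⁻¹ / (lam n)⁻¹) atTop (𝓝 α) := by
    simpa only [inv_div_inv] using hratio
  have htail := tendsto_tailSum_ratio (fun n => inv_pos.2 (hpos n)) hsum hinv_ratio
  simp only [hA]
  exact htail.comp (tendsto_add_atTop_nat 1)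

theorem tail_sum_ratio_limit (lam : ℕ → ℝ) (hpos : ∀ n, 0 < lam n)
    (hsum : Summable fun n => (lam n)⁻¹)
    (A : ℕ → ℝ) (hA : ∀ n, A n = ∑' i : ℕ, (lam (n + 1 + i))⁻¹)
    (α : ℝ) (hα : α ∈ Set.Ico (0 : ℝ) 1)
    (hratio : Tendsto (fun n => lam n / lam (n + 1)) atTop (𝓝 α)) :
    Tendsto (fun n => A (n + 1) / A n) atTop (𝓝 α) :=
  tail_sum_ratio_limit_general lam hpos hsum A hA α hratio
end

section
/- Let $(\lambda_n)_{n\ge2}$ be positive reals with $\sum_{n\ge2}\lambda_n^{-1}<\infty$, $A_n=\sum_{i=n+1}^\infty \lambda_i^{-1}$. If $\lambda_n/\lambda_{n+1}\to 1$ as $n\to\infty$, then $\lambda_n^{-1} = o(A_n)$, i.e. $\lambda_n^{-1}/A_n \to 0$ as $n\to\infty$. -/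
open Filter Topology

theorem reciprocal_little_o_tail (lam : ℕ → ℝ) (hpos : ∀ n, 0 < lam n)
    (hsum : Summable fun n => (lam n)⁻¹)
    (A : ℕ → ℝ) (hA : ∀ n, A n = ∑' i : ℕ, (lam (n + 1 + i))⁻¹)
    (hratio : Tendsto (fun n => lam n / lam (n + 1)) atTop (𝓝 1)) :
    Tendsto (fun n => (lam n)⁻¹ / A n) atTop (𝓝 0) := by
  have hinv : ∀ n, 0 < (lam n)⁻¹ := fun n => inv_pos.2 (hpos n)
  have hsumsh : ∀ n, Summable fun i => (lam (n + 1 + i))⁻¹ := by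
    intro n
    exact hsum.comp_injective (fun a b h => by omega)
  have hApos : ∀ n, 0 < A n := by
    intro n
    rw [hA n]
    exact Summable.tsum_pos (hsumsh n) (fun i => (hinv _).le) 0 (hinv _)
  rw [Metric.tendsto_atTop]
  intro ε hε
  obtain ⟨m, hm⟩ : ∃ m : ℕ, 2 / ε < m := exists_nat_gt _
  have hm0 : 0 < (m : ℝ) := lt_trans (by positivity) hm
  have hmnat : 0 < m := by exact_mod_cast hm0
  set δ : ℝ := 1 / (2 * m) with hδ
  have hδpos : 0 < δ := by positivity
  have hδle : δ ≤ 1 / 2 := by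
    rw [hδ]
    rw [div_le_div_iff₀ (by positivity) (by norm_num)]
    have hm1 : (1:ℝ) ≤ m := by exact_mod_cast hmnat
    nlinarith [hm1]
  set c : ℝ := 1 - δ with hc
  have hc0 : 0 < c := by rw [hc]; linarith
  have hc1 : c < 1 := by rw [hc]; linarith
  have hcm : (1:ℝ) / 2 ≤ c ^ m := by
    have := one_add_mul_le_pow (a := -δ) (by linarith) m
    have h2 : 1 + (m : ℝ) * (-δ) = 1 / 2 := by
      rw [hδ]; field_simp; ring
    rw [h2] at this
    simpa [hc, sub_eq_add_neg] using this
  -- eventually ratio ≥ c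
  have hev : ∀ᶠ n in atTop, c ≤ lam n / lam (n + 1) :=
    hratio.eventually (eventually_ge_nhds hc1)
  obtain ⟨N, hN⟩ := eventually_atTop.1 hev
  refine ⟨N, fun n hn => ?_⟩
  -- step: for k ≥ N, c * (lam k)⁻¹ ≤ (lam (k+1))⁻¹
  have step : ∀ k, N ≤ k → c * (lam k)⁻¹ ≤ (lam (k + 1))⁻¹ := by
    intro k hk
    have h1 : (lam k / lam (k + 1)) * (lam k)⁻¹ = (lam (k + 1))⁻¹ := by
      rw [div_eq_mul_inv, mul_right_comm, mul_inv_cancel₀ (hpos k).ne', one_mul]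
    rw [← h1]
    exact mul_le_mul_of_nonneg_right (hN k hk) (hinv k).le
  -- iterate: c^(i+1) * λn⁻¹ ≤ λ_{n+1+i}⁻¹
  have iter : ∀ i : ℕ, c ^ (i + 1) * (lam n)⁻¹ ≤ (lam (n + 1 + i))⁻¹ := by
    intro i
    induction i with
    | zero => simpa using step n hn
    | succ j ih =>
      have h1 : c * (lam (n + 1 + j))⁻¹ ≤ (lam (n + 1 + j + 1))⁻¹ :=
        step (n + 1 + j) (by omega)
      have h2 : c ^ (j + 1 + 1) * (lam n)⁻¹ ≤ c * (lam (n + 1 + j))⁻¹ := by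
        calc c ^ (j + 1 + 1) * (lam n)⁻¹ = c * (c ^ (j + 1) * (lam n)⁻¹) := by ring
          _ ≤ c * (lam (n + 1 + j))⁻¹ := mul_le_mul_of_nonneg_left ih hc0.le
      have : n + 1 + (j + 1) = n + 1 + j + 1 := by omega
      rw [this]
      exact h2.trans h1
  -- each of the first m terms is ≥ (1/2) λn⁻¹
  have hterm : ∀ i < m, (1 / 2) * (lam n)⁻¹ ≤ (lam (n + 1 + i))⁻¹ := by
    intro i hi
    refine le_trans ?_ (iter i)
    apply mul_le_mul_of_nonneg_right _ (hinv n).le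
    exact hcm.trans (pow_le_pow_of_le_one hc0.le hc1.le (by omega))
  -- A n ≥ (m/2) λn⁻¹
  have hAn : (m : ℝ) * ((1 / 2) * (lam n)⁻¹) ≤ A n := by
    rw [hA n]
    calc (m : ℝ) * ((1 / 2) * (lam n)⁻¹)
        = ∑ i ∈ Finset.range m, (1 / 2) * (lam n)⁻¹ := by
          rw [Finset.sum_const, Finset.card_range, nsmul_eq_mul]
      _ ≤ ∑ i ∈ Finset.range m, (lam (n + 1 + i))⁻¹ :=
          Finset.sum_le_sum (fun i hi => hterm i (Finset.mem_range.1 hi))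
      _ ≤ ∑' i : ℕ, (lam (n + 1 + i))⁻¹ :=
          Summable.sum_le_tsum _ (fun i _ => (hinv _).le) (hsumsh n)
  have hfinal : (lam n)⁻¹ / A n ≤ 2 / m := by
    rw [div_le_div_iff₀ (hApos n) hm0]
    nlinarith [hApos n, hinv n]
  have h2m : 2 / (m : ℝ) < ε := by
    rw [div_lt_iff₀ hm0]
    rw [div_lt_iff₀ hε] at hm
    linarith
  rw [Real.dist_eq, sub_zero, abs_of_pos (div_pos (hinv n) (hApos n))]
  exact lt_of_le_of_lt hfinal h2m
end

section
/- Let $(\lambda_n)_{n\ge2}$ be positive reals with $\sum_{n\ge2}\lambda_n^{-1}<\infty$, $A_n=\sum_{i=n+1}^\infty \lambda_i^{-1}$, $B_n^2=\sum_{i=n+1}^\infty \lambda_i^{-2}$. If $\sum_{i=1}^\infty (\lambda_{i+1} A_i)^{-2} < \infty$, then $B_n = o(A_n)$ as $n\to\infty$. -/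
/-! Since the tail sums `A i` decrease, `λ_{i+1}⁻² = (λ_{i+1} A_i)⁻² A_i² ≤ (λ_{i+1} A_i)⁻² A_n²`
for `i ≥ n`; summing over `i ≥ n` gives `B_n² ≤ A_n² ∑_{i ≥ n} (λ_{i+1} A_i)⁻²`, and the right-hand
factor is the tail of a convergent series. -/

open Filter Topology

lemma antitone_tsum_nat_add {f : ℕ → ℝ} (hf : Summable f) (hf0 : 0 ≤ f) :
    Antitone fun n => ∑' i, f (i + n) := by
  refine antitone_nat_of_succ_le fun n => ?_
  have hsplit := ((summable_nat_add_iff n).mpr hf).tsum_eq_zero_add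
  simp only [zero_add, add_right_comm _ 1 n, add_assoc] at hsplit
  rw [hsplit]
  exact le_add_of_nonneg_left (hf0 n)

lemma sqrt_tsum_sq_div_le_of_antitone {x c : ℕ → ℝ} (hc : Antitone c) (hc0 : ∀ i, 0 < c i)
    (hx : Summable fun i => (x i / c i) ^ 2) :
    √(∑' i, x i ^ 2) / c 0 ≤ √(∑' i, (x i / c i) ^ 2) := by
  have hle : ∀ i, x i ^ 2 ≤ c 0 ^ 2 * (x i / c i) ^ 2 := fun i => by
    rw [div_pow, mul_div_assoc', le_div_iff₀ (pow_pos (hc0 i) 2)]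
    have := pow_le_pow_left₀ (hc0 i).le (hc (Nat.zero_le i)) 2
    nlinarith [sq_nonneg (x i)]
  have hsum : ∑' i, x i ^ 2 ≤ c 0 ^ 2 * ∑' i, (x i / c i) ^ 2 := by
    rw [← tsum_mul_left]
    exact Summable.tsum_le_tsum hle
      (.of_nonneg_of_le (fun _ => sq_nonneg _) hle (hx.mul_left _)) (hx.mul_left _)
  rw [div_le_iff₀ (hc0 0), mul_comm]
  calc √(∑' i, x i ^ 2) ≤ √(c 0 ^ 2 * ∑' i, (x i / c i) ^ 2) := Real.sqrt_le_sqrt hsum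
    _ = c 0 * √(∑' i, (x i / c i) ^ 2) := by
      rw [Real.sqrt_mul (sq_nonneg _), Real.sqrt_sq (hc0 0).le]

theorem summability_implies_BoA (lam : ℕ → ℝ) (hpos : ∀ n, 0 < lam n)
    (hsum : Summable fun n => (lam n)⁻¹)
    (A : ℕ → ℝ) (hA : ∀ n, A n = ∑' i : ℕ, (lam (n + 1 + i))⁻¹)
    (B : ℕ → ℝ) (hB : ∀ n, B n = Real.sqrt (∑' i : ℕ, ((lam (n + 1 + i))⁻¹) ^ 2))
    (hcond : Summable fun i : ℕ => ((lam (i + 2) * A (i + 1))⁻¹) ^ 2) :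
    Tendsto (fun n => B n / A n) atTop (𝓝 0) := by
  set g := fun i : ℕ => ((lam (i + 2) * A (i + 1))⁻¹) ^ 2
  have hA' : A = fun n => ∑' i, (lam (i + (n + 1)))⁻¹ := by
    funext n; simp only [hA, add_comm (n + 1)]
  have hlam0 : 0 ≤ fun n => (lam n)⁻¹ := fun n => (inv_pos.2 (hpos n)).le
  have hAanti : Antitone A := hA' ▸ (antitone_tsum_nat_add hsum hlam0).comp_monotone
    fun _ _ h => Nat.succ_le_succ h
  have hApos : ∀ n, 0 < A n := fun n => hA' ▸
    ((summable_nat_add_iff (n + 1)).2 hsum).tsum_pos (fun i => hlam0 _) 0 (inv_pos.2 (hpos _))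
  have hbound : ∀ n, B (n + 1) / A (n + 1) ≤ √(∑' k, g (k + n)) := fun n => by
    have hB' : B (n + 1) = √(∑' i, (lam (i + n + 2))⁻¹ ^ 2) := by
      rw [hB]; congr 2; funext i; congr 3; omega
    have hg : ∀ k, g (k + n) = ((lam (k + n + 2))⁻¹ / A (k + n + 1)) ^ 2 := fun k => by
      simp only [g, div_eq_mul_inv, mul_inv]
    rw [hB', tsum_congr hg]
    have h := sqrt_tsum_sq_div_le_of_antitone (x := fun i => (lam (i + n + 2))⁻¹)
      (c := fun i => A (i + n + 1)) (hAanti.comp_monotone fun _ _ hij => by omega)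
      (fun i => hApos _) (((summable_nat_add_iff n).2 hcond).congr hg)
    rwa [zero_add] at h
  have htail : Tendsto (fun n => √(∑' k, g (k + n))) atTop (𝓝 0) := by
    simpa using (tendsto_sum_nat_add g).sqrt
  refine (tendsto_add_atTop_iff_nat 1).1 (squeeze_zero (fun n => ?_) hbound htail)
  exact div_nonneg (by rw [hB]; positivity) (hApos _).le
end

section
/- Let $(\lambda_n)_{n\ge2}$ be positive reals with $\sum_{n\ge2}\lambda_n^{-1}<\infty$, let $X_i$ be independent Exp($\lambda_i$) random variables, $T_n=\sum_{i=n+1}^\infty X_i$, and $A_n=\sum_{i=n+1}^\infty \lambda_i^{-1}$. If $\sum_{i=1}^\infty (\lambda_{i+1}A_i)^{-2} < \infty$, then $T_n/A_n \to 1$ almost surely as $n\to\infty$. -/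
/-!
The centred, rescaled increments `Y m = (X (m + 1) - λ_{m+1}⁻¹) / A m` are independent with mean
zero and variance `(λ_{m+1} A m)⁻²`, so the summability hypothesis makes their partial sums an
`L²`-bounded martingale, which converges almost surely. Since
`T n - A n = ∑_{i ≥ 0} A (n + i) Y (n + i)` with `A` positive and decreasing, Kronecker's lemma
(in its tail form) gives `(T n - A n) / A n → 0`.
-/

open MeasureTheory ProbabilityTheory Filter Topology Real Finset

lemma sum_range_mul_sub_succ (b r : ℕ → ℝ) (n : ℕ) :
    ∑ i ∈ range n, b i * (r i - r (i + 1))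
      = b 0 * r 0 - b n * r n + ∑ i ∈ range n, (b (i + 1) - b i) * r (i + 1) := by
  induction n with
  | zero => simp
  | succ n ih => rw [sum_range_succ, ih, sum_range_succ]; ring

lemma abs_sum_range_mul_sub_succ_le {b r : ℕ → ℝ} (hb : Antitone b) (hb0 : ∀ n, 0 ≤ b n)
    {ε : ℝ} (hr : ∀ n, |r n| ≤ ε) (n : ℕ) :
    |∑ i ∈ range n, b i * (r i - r (i + 1))| ≤ 2 * b 0 * ε := by
  have hboundary : |b 0 * r 0 - b n * r n| ≤ b 0 * ε + b n * ε := by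
    refine (abs_sub _ _).trans (add_le_add ?_ ?_) <;>
      rw [abs_mul, abs_of_nonneg (hb0 _)] <;> exact mul_le_mul_of_nonneg_left (hr _) (hb0 _)
  have hinterior : |∑ i ∈ range n, (b (i + 1) - b i) * r (i + 1)| ≤ (b 0 - b n) * ε := by
    calc |∑ i ∈ range n, (b (i + 1) - b i) * r (i + 1)|
        ≤ ∑ i ∈ range n, (b i - b (i + 1)) * ε := by
          refine (abs_sum_le_sum_abs _ _).trans (sum_le_sum fun i _ => ?_)
          rw [abs_mul, abs_sub_comm, abs_of_nonneg (sub_nonneg.2 (hb i.le_succ))]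
          exact mul_le_mul_of_nonneg_left (hr _) (sub_nonneg.2 (hb i.le_succ))
      _ = (b 0 - b n) * ε := by rw [← sum_mul, sum_range_sub']
  have hbn : b n ≤ b 0 := hb n.zero_le
  have hε : 0 ≤ ε := (abs_nonneg _).trans (hr 0)
  rw [sum_range_mul_sub_succ]
  calc _ ≤ _ := abs_add_le _ _
    _ ≤ 2 * b 0 * ε := by nlinarith [hb0 n]

/-- Kronecker's lemma, tail form. -/
theorem tendsto_tail_sum_mul_div_of_tendsto_sum {b Y s : ℕ → ℝ} {c : ℝ} (hb : Antitone b)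
    (hb0 : ∀ n, 0 ≤ b n) (hY : Tendsto (fun n => ∑ i ∈ range n, Y i) atTop (𝓝 c))
    (hs : ∀ k, HasSum (fun i => b (k + i) * Y (k + i)) (s k)) :
    Tendsto (fun k => s k / b k) atTop (𝓝 0) := by
  set r : ℕ → ℝ := fun n => c - ∑ i ∈ range n, Y i
  have hr : Tendsto r atTop (𝓝 0) := by simpa using hY.const_sub c
  have hYr : ∀ n, Y n = r n - r (n + 1) := fun n => by simp only [r, sum_range_succ]; ring
  have htail : ∀ k ε, (∀ n, k ≤ n → |r n| ≤ ε) → |s k| ≤ 2 * b k * ε := by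
    intro k ε hε
    have hpartial := (hs k).tendsto_sum_nat
    simp only [hYr] at hpartial
    refine le_of_tendsto hpartial.abs (Eventually.of_forall fun n => ?_)
    simpa [add_assoc] using abs_sum_range_mul_sub_succ_le (b := fun i => b (k + i))
      (r := fun i => r (k + i)) (fun i j hij => hb (by omega)) (fun i => hb0 _)
      (fun i => hε _ (by omega)) n
  rw [Metric.tendsto_atTop]
  intro ε hε
  obtain ⟨N, hN⟩ := Metric.tendsto_atTop.1 hr (ε / 3) (by positivity)
  refine ⟨N, fun k hk => ?_⟩
  have hsk := htail k (ε / 3) fun n hn => by simpa using (hN n (hk.trans hn)).le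
  rw [Real.dist_eq, sub_zero, abs_div, abs_of_nonneg (hb0 k)]
  calc |s k| / b k ≤ 2 * (ε / 3) := div_le_of_le_mul₀ (hb0 k) (by positivity) (by linarith)
    _ < ε := by linarith

namespace ProbabilityTheory

lemma integral_pow_expMeasure {r : ℝ} (hr : 0 < r) (n : ℕ) :
    ∫ x, x ^ n ∂expMeasure r = n.factorial / r ^ n := by
  have hdensity : ∀ x, (gammaPDF 1 r x).toReal * x ^ n
      = (Set.Ici 0).indicator (fun x => r * (x ^ ((n + 1 : ℝ) - 1) * exp (-(r * x)))) x := by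
    intro x
    rw [gammaPDF, ENNReal.toReal_ofReal (gammaPDFReal_nonneg zero_lt_one hr x)]
    by_cases hx : 0 ≤ x
    · simp [gammaPDFReal, hx]; ring
    · simp [gammaPDFReal, hx]
  rw [expMeasure, gammaMeasure, integral_withDensity_eq_integral_toReal_smul
    (f := gammaPDF 1 r) (measurable_gammaPDFReal 1 r).ennreal_ofReal
    (ae_of_all _ fun _ => ENNReal.ofReal_lt_top)]
  simp only [smul_eq_mul, hdensity]
  rw [integral_indicator measurableSet_Ici, integral_Ici_eq_integral_Ioi, integral_const_mul,
    integral_rpow_mul_exp_neg_mul_Ioi (by positivity) hr, Real.Gamma_nat_eq_factorial,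
    ← Nat.cast_add_one, Real.rpow_natCast, one_div, inv_pow, pow_succ]
  field_simp

-- A Bochner integral that is not zero can only come from an integrable function.
lemma integrable_pow_expMeasure {r : ℝ} (hr : 0 < r) (n : ℕ) :
    Integrable (fun x => x ^ n) (expMeasure r) :=
  .of_integral_ne_zero (by rw [integral_pow_expMeasure hr]; positivity)

lemma memLp_id_expMeasure {r : ℝ} (hr : 0 < r) : MemLp id 2 (expMeasure r) :=
  (memLp_two_iff_integrable_sq aestronglyMeasurable_id).2 (integrable_pow_expMeasure hr 2)

lemma integral_id_expMeasure {r : ℝ} (hr : 0 < r) : ∫ x, x ∂expMeasure r = r⁻¹ := by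
  simpa using integral_pow_expMeasure hr 1

lemma variance_id_expMeasure {r : ℝ} (hr : 0 < r) : Var[id; expMeasure r] = (r ^ 2)⁻¹ := by
  have := isProbabilityMeasure_expMeasure hr
  rw [variance_eq_sub (memLp_id_expMeasure hr)]
  simp only [id, Pi.pow_apply, integral_pow_expMeasure hr 2, integral_id_expMeasure hr]
  norm_num
  ring

variable {Ω : Type*} [MeasurableSpace Ω] {P : Measure Ω}

lemma eLpNorm_two_eq_evariance_rpow_of_integral_eq_zero {X : Ω → ℝ} (hX : P[X] = 0) :
    eLpNorm X 2 P = eVar[X; P] ^ (2⁻¹ : ℝ) := by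
  rw [eLpNorm_eq_lintegral_rpow_enorm_toReal two_ne_zero ENNReal.ofNat_ne_top, evariance, hX]
  simp

variable [IsProbabilityMeasure P]

lemma martingale_sum_range_succ {E : Type*} [NormedAddCommGroup E] [NormedSpace ℝ E]
    [CompleteSpace E] [MeasurableSpace E] [BorelSpace E] [SecondCountableTopology E]
    {Y : ℕ → Ω → E} (hmeas : ∀ i, StronglyMeasurable (Y i)) (hind : iIndepFun Y P)
    (hint : ∀ i, Integrable (Y i) P) (hmean : ∀ i, P[Y i] = 0) :
    Martingale (fun n => ∑ i ∈ range (n + 1), Y i) (Filtration.natural Y hmeas) P := by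
  set ℱ := Filtration.natural Y hmeas
  have hadapted : StronglyAdapted ℱ fun n => ∑ i ∈ range (n + 1), Y i := fun n =>
    Finset.stronglyMeasurable_sum _ fun i hi =>
      (Filtration.stronglyAdapted_natural hmeas i).mono (ℱ.mono (by simp at hi; omega))
  have hsum_int : ∀ n, Integrable (∑ i ∈ range (n + 1), Y i) P := fun n =>
    integrable_finsetSum' _ fun i _ => hint i
  refine martingale_nat hadapted hsum_int fun n => ?_
  have hnext : P[Y (n + 1)|ℱ n] =ᵐ[P] fun _ => 0 := by
    simpa [hmean] using hind.condExp_natural_ae_eq_of_lt hmeas n.lt_succ_self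
  rw [sum_range_succ _ (n + 1)]
  filter_upwards [condExp_add (hsum_int n) (hint (n + 1)) (ℱ n), hnext] with ω hadd hω
  rw [hadd, Pi.add_apply, hω, condExp_of_stronglyMeasurable (ℱ.le n) (hadapted n) (hsum_int n)]
  simp

theorem ae_tendsto_sum_of_summable_variance {Y : ℕ → Ω → ℝ} (hmeas : ∀ i, Measurable (Y i))
    (hind : iIndepFun Y P) (hL2 : ∀ i, MemLp (Y i) 2 P) (hmean : ∀ i, P[Y i] = 0)
    (hvar : Summable fun i => Var[Y i; P]) :
    ∀ᵐ ω ∂P, ∃ c, Tendsto (fun n => ∑ i ∈ range n, Y i ω) atTop (𝓝 c) := by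
  set S : ℕ → Ω → ℝ := fun n => ∑ i ∈ range (n + 1), Y i
  have hmart : Martingale S _ P := martingale_sum_range_succ
    (fun i => (hmeas i).stronglyMeasurable) hind (fun i => (hL2 i).integrable one_le_two) hmean
  have hS_L2 : ∀ n, MemLp (S n) 2 P := fun n => memLp_finsetSum' _ fun i _ => hL2 i
  have hS_mean : ∀ n, P[S n] = 0 := fun n => by
    simp only [S, Finset.sum_apply]
    rw [integral_finsetSum _ fun i _ => (hL2 i).integrable one_le_two]
    exact sum_eq_zero fun i _ => hmean i
  have hS_var : ∀ n, Var[S n; P] ≤ ∑' i, Var[Y i; P] := fun n => by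
    rw [IndepFun.variance_sum (fun i _ => hL2 i) fun i _ j _ hij => hind.indepFun hij]
    exact hvar.sum_le_tsum _ fun i _ => variance_nonneg _ _
  have hbdd : ∀ n, eLpNorm (S n) 1 P ≤
      (ENNReal.ofReal (∑' i, Var[Y i; P]) ^ (2⁻¹ : ℝ)).toNNReal := by
    intro n
    rw [ENNReal.coe_toNNReal (ENNReal.rpow_ne_top_of_nonneg (by norm_num) ENNReal.ofReal_ne_top)]
    calc eLpNorm (S n) 1 P ≤ eLpNorm (S n) 2 P :=
          eLpNorm_le_eLpNorm_of_exponent_le one_le_two (hS_L2 n).aestronglyMeasurable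
      _ = ENNReal.ofReal Var[S n; P] ^ (2⁻¹ : ℝ) := by
          rw [eLpNorm_two_eq_evariance_rpow_of_integral_eq_zero (hS_mean n),
            (hS_L2 n).ofReal_variance_eq]
      _ ≤ _ := by gcongr; exact hS_var n
  filter_upwards [hmart.submartingale.exists_ae_tendsto_of_bdd hbdd] with ω ⟨c, hc⟩
  exact ⟨c, (tendsto_add_atTop_iff_nat 1).1 (by simpa [S] using hc)⟩

theorem ae_tendsto_sum_mul_sub_inv_of_hasLaw_expMeasure {X : ℕ → Ω → ℝ} {lam a : ℕ → ℝ}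
    (hpos : ∀ i, 0 < lam i) (hmeas : ∀ i, Measurable (X i)) (hind : iIndepFun X P)
    (hlaw : ∀ i, HasLaw (X i) (expMeasure (lam i)) P) (ha : Summable fun i => (a i / lam i) ^ 2) :
    ∀ᵐ ω ∂P, ∃ c, Tendsto (fun n => ∑ i ∈ range n, a i * (X i ω - (lam i)⁻¹)) atTop (𝓝 c) := by
  have hL2 : ∀ i, MemLp (X i) 2 P := fun i =>
    (memLp_map_measure_iff aestronglyMeasurable_id (hlaw i).aemeasurable).1
      ((hlaw i).map_eq ▸ memLp_id_expMeasure (hpos i))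
  have hmean : ∀ i, P[X i] = (lam i)⁻¹ := fun i =>
    (hlaw i).integral_eq.trans (integral_id_expMeasure (hpos i))
  have hvar : ∀ i, Var[X i; P] = (lam i ^ 2)⁻¹ := fun i =>
    (hlaw i).variance_eq.trans (variance_id_expMeasure (hpos i))
  refine ae_tendsto_sum_of_summable_variance (fun i => by fun_prop)
    (hind.comp (fun i x => a i * (x - (lam i)⁻¹)) fun i => by fun_prop)
    (fun i => ((hL2 i).sub (memLp_const _)).const_mul (a i)) (fun i => ?_) (ha.congr fun i => ?_)
  · rw [integral_const_mul, integral_sub ((hL2 i).integrable one_le_two) (integrable_const _),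
      hmean, integral_const, probReal_univ, one_smul, sub_self, mul_zero]
  · rw [variance_const_mul, variance_sub_const (hL2 i).aestronglyMeasurable, hvar]
    ring

end ProbabilityTheory

theorem hitting_time_slln_general {Ω : Type*} [MeasurableSpace Ω]
    (P : Measure Ω) [IsProbabilityMeasure P]
    (lam : ℕ → ℝ) (hpos : ∀ n, 0 < lam n)
    (hsum : Summable fun n => (lam n)⁻¹)
    (X : ℕ → Ω → ℝ) (hmeas : ∀ i, Measurable (X i))
    (hindep : iIndepFun X P)
    (hexp : ∀ i, Measure.map (X i) P = expMeasure (lam i))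
    (T : ℕ → Ω → ℝ)
    (hT : ∀ᵐ ω ∂P, ∀ n, HasSum (fun i => X (n + 1 + i) ω) (T n ω))
    (A : ℕ → ℝ) (hA : ∀ n, A n = ∑' i : ℕ, (lam (n + 1 + i))⁻¹)
    (hcond : Summable fun i : ℕ => ((lam (i + 2) * A (i + 1))⁻¹) ^ 2) :
    ∀ᵐ ω ∂P, Tendsto (fun n => T n ω / A n) atTop (𝓝 1) := by
  have hsum_tail : ∀ n, Summable fun i => (lam (n + 1 + i))⁻¹ := fun n =>
    hsum.comp_injective (add_right_injective (n + 1))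
  have hA_pos : ∀ n, 0 < A n := fun n =>
    hA n ▸ (hsum_tail n).tsum_pos (fun i => (inv_pos.2 (hpos _)).le) 0 (inv_pos.2 (hpos _))
  have hA_anti : Antitone A := antitone_nat_of_succ_le fun n => by
    rw [hA, hA, (hsum_tail n).tsum_eq_zero_add, tsum_congr fun i =>
      congrArg (fun m => (lam m)⁻¹) (by omega : n + 1 + (i + 1) = n + 1 + 1 + i)]
    exact le_add_of_nonneg_left (inv_pos.2 (hpos _)).le
  have hconv := ae_tendsto_sum_mul_sub_inv_of_hasLaw_expMeasure (X := fun i => X (i + 1))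
    (lam := fun i => lam (i + 1)) (a := fun i => (A i)⁻¹) (fun i => hpos _) (fun i => hmeas _)
    (hindep.precomp (add_left_injective 1)) (fun i => ⟨(hmeas _).aemeasurable, hexp _⟩)
    ((summable_nat_add_iff 1).1 (hcond.congr fun i => by ring_nf))
  filter_upwards [hT, hconv] with ω hTω ⟨c, hc⟩
  have hrel : Tendsto (fun n => (T n ω - A n) / A n) atTop (𝓝 0) :=
    tendsto_tail_sum_mul_div_of_tendsto_sum hA_anti (fun n => (hA_pos n).le) hc fun k => by
      have hterm : ∀ i, A (k + i) * ((A (k + i))⁻¹ * (X (k + i + 1) ω - (lam (k + i + 1))⁻¹))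
          = X (k + 1 + i) ω - (lam (k + 1 + i))⁻¹ := fun i => by
        rw [mul_inv_cancel_left₀ (hA_pos _).ne', add_right_comm]
      simpa only [hterm] using (hTω k).sub (hA k ▸ (hsum_tail k).hasSum)
  simpa using (hrel.const_add 1).congr fun n => by rw [one_add_div (hA_pos n).ne', add_sub_cancel]

theorem hitting_time_slln {Ω : Type*} [MeasurableSpace Ω]
    (P : Measure Ω) [IsProbabilityMeasure P]
    (lam : ℕ → ℝ) (hpos : ∀ n, 0 < lam n)
    (hsum : Summable fun n => (lam n)⁻¹)
    (X : ℕ → Ω → ℝ) (hmeas : ∀ i, Measurable (X i))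
    (hindep : iIndepFun X P)
    (hexp : ∀ i, Measure.map (X i) P = expMeasure (lam i))
    (T : ℕ → Ω → ℝ) (hTmeas : ∀ n, Measurable (T n))
    (hT : ∀ᵐ ω ∂P, ∀ n, HasSum (fun i => X (n + 1 + i) ω) (T n ω))
    (A : ℕ → ℝ) (hA : ∀ n, A n = ∑' i : ℕ, (lam (n + 1 + i))⁻¹)
    (hcond : Summable fun i : ℕ => ((lam (i + 2) * A (i + 1))⁻¹) ^ 2) :
    ∀ᵐ ω ∂P, Tendsto (fun n => T n ω / A n) atTop (𝓝 1) :=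
  hitting_time_slln_general P lam hpos hsum X hmeas hindep hexp T hT A hA hcond
end

section
/- Let $(\lambda_n)_{n\ge2}$ be positive reals with $\sum_{n\ge2}\lambda_n^{-1}<\infty$, let $X_i$ be independent Exp($\lambda_i$) variables and $T_n = \sum_{i=n+1}^\infty X_i$. Then for every $u < \inf_{i>n}\lambda_i$ one has $\mathbb{E}[e^{u T_n}] = \prod_{i=n+1}^\infty \frac{\lambda_i}{\lambda_i - u}$, and the infinite product converges. -/
/-!
The factor `λ / (λ - u)` is the moment generating function of `Exp(λ)` at `u`, so by independence
the moment generating functions of the partial sums of `T_n` are the partial products. These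
converge since `λ / (λ - u) = 1 + u / (λ - u)` and `∑ 1 / (λ - u) < ∞`. As the `X_i` are
nonnegative, `exp (u S_m)` is monotone in `m` along the partial sums `S_m`, increasing for
`u ≥ 0` and decreasing for `u ≤ 0`; monotone resp. dominated convergence then passes to the limit.
-/

open MeasureTheory ProbabilityTheory Filter Topology Set

section ExponentialMGF

variable {Ω : Type*} [MeasurableSpace Ω] {μ : Measure Ω} {X : Ω → ℝ} {r u : ℝ}

lemma lintegral_ofReal_exp_mul_expMeasure (hr : 0 < r) (hu : u < r) :
    ∫⁻ x, ENNReal.ofReal (Real.exp (u * x)) ∂expMeasure r = ENNReal.ofReal (r / (r - u)) := by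
  have hdensity : (exponentialPDF r * fun x ↦ ENNReal.ofReal (Real.exp (u * x))) =
      (Ici 0).indicator fun x ↦ ENNReal.ofReal (r * Real.exp ((u - r) * x)) := by
    ext x
    rcases lt_or_ge x 0 with hx | hx
    · simp [exponentialPDF_of_neg hx, not_le.mpr hx]
    · rw [indicator_of_mem (show x ∈ Ici 0 from hx), Pi.mul_apply, exponentialPDF_of_nonneg hx,
        ← ENNReal.ofReal_mul (by positivity), mul_assoc, ← Real.exp_add]
      ring_nf
  have hint : IntegrableOn (fun x ↦ r * Real.exp ((u - r) * x)) (Ici 0) :=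
    ((integrableOn_Ici_iff_integrableOn_Ioi).2
      (integrableOn_exp_mul_Ioi (sub_neg.mpr hu) 0)).const_mul r
  change ∫⁻ x, _ ∂volume.withDensity (exponentialPDF r) = _
  rw [lintegral_withDensity_eq_lintegral_mul _
    (show Measurable (exponentialPDF r) from (measurable_exponentialPDFReal r).ennreal_ofReal)
    (by fun_prop), hdensity, lintegral_indicator measurableSet_Ici,
    ← ofReal_integral_eq_lintegral_ofReal hint (ae_of_all _ fun x ↦ by positivity),
    integral_const_mul, integral_Ici_eq_integral_Ioi, integral_exp_mul_Ioi (sub_neg.mpr hu),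
    mul_zero, Real.exp_zero, neg_div, ← div_neg, neg_sub, mul_one_div]

lemma mgf_id_expMeasure (hr : 0 < r) (hu : u < r) : mgf id (expMeasure r) u = r / (r - u) := by
  rw [mgf, integral_eq_lintegral_of_nonneg_ae (ae_of_all _ fun x ↦ by positivity)
    (by fun_prop)]
  simp only [id, lintegral_ofReal_exp_mul_expMeasure hr hu,
    ENNReal.toReal_ofReal (div_pos hr (sub_pos.mpr hu)).le]

lemma ae_nonneg_expMeasure (r : ℝ) : ∀ᵐ x ∂expMeasure r, 0 ≤ x := by
  rw [ae_iff]
  simp only [not_le]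
  change expMeasure r (Iio 0) = 0
  rw [expMeasure, gammaMeasure, withDensity_apply _ measurableSet_Iio]
  exact lintegral_exponentialPDF_of_nonpos le_rfl

lemma aemeasurable_of_map_eq_expMeasure (hr : 0 < r) (hX : μ.map X = expMeasure r) :
    AEMeasurable X μ :=
  .of_map_ne_zero <| hX ▸ (isProbabilityMeasure_expMeasure hr).ne_zero

lemma mgf_of_map_eq_expMeasure (hr : 0 < r) (hu : u < r) (hX : μ.map X = expMeasure r) :
    mgf X μ u = r / (r - u) := by
  rw [← mgf_id_map (aemeasurable_of_map_eq_expMeasure hr hX), hX, mgf_id_expMeasure hr hu]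

lemma ae_nonneg_of_map_eq_expMeasure (hr : 0 < r) (hX : μ.map X = expMeasure r) :
    ∀ᵐ ω ∂μ, 0 ≤ X ω :=
  ae_of_ae_map (aemeasurable_of_map_eq_expMeasure hr hX) (hX ▸ ae_nonneg_expMeasure r)

end ExponentialMGF

section InfiniteProduct

variable {ι : Type*} {a : ι → ℝ}

lemma summable_inv_sub_of_summable_inv (ha₀ : ∀ i, a i ≠ 0) (ha : Summable fun i ↦ (a i)⁻¹)
    (u : ℝ) : Summable fun i ↦ (a i - u)⁻¹ := by
  refine (ha.norm.mul_left 2).of_norm_bounded_eventually ?_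
  have hsmall : ∀ᶠ i in cofinite, |u * (a i)⁻¹| ≤ 1 / 2 := by
    have := (ha.tendsto_cofinite_zero.const_mul u).abs
    rw [mul_zero, abs_zero] at this
    exact this.eventually_le_const one_half_pos
  filter_upwards [hsmall] with i hi
  have hfactor : a i - u = a i * (1 - u * (a i)⁻¹) := by
    have := ha₀ i
    field_simp
  have hhalf : 1 / 2 ≤ 1 - u * (a i)⁻¹ := by linarith [le_abs_self (u * (a i)⁻¹)]
  calc ‖(a i - u)⁻¹‖ = ‖(a i)⁻¹‖ * (1 - u * (a i)⁻¹)⁻¹ := by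
        rw [hfactor, mul_inv, norm_mul, norm_inv (1 - _),
          Real.norm_of_nonneg (r := 1 - _) (by linarith)]
    _ ≤ ‖(a i)⁻¹‖ * 2 := by
        gcongr
        rw [inv_le_comm₀ (by linarith) two_pos]
        linarith
    _ = 2 * ‖(a i)⁻¹‖ := mul_comm _ _

lemma multipliable_div_sub_of_summable_inv (ha₀ : ∀ i, a i ≠ 0)
    (ha : Summable fun i ↦ (a i)⁻¹) {u : ℝ} (hu : ∀ i, a i ≠ u) :
    Multipliable fun i ↦ a i / (a i - u) := by
  have hone_add : (fun i ↦ a i / (a i - u)) = fun i ↦ 1 + u * (a i - u)⁻¹ := by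
    ext i
    have : a i - u ≠ 0 := sub_ne_zero.mpr (hu i)
    field_simp
    ring
  rw [hone_add]
  exact Real.multipliable_one_add_of_summable
    ((summable_inv_sub_of_summable_inv ha₀ ha u).mul_left u)

end InfiniteProduct

section MonotoneLimit

variable {α : Type*} [MeasurableSpace α] {μ : Measure α}

lemma integrable_of_tendsto_of_monotone_of_tendsto_integral {f : ℕ → α → ℝ} {F : α → ℝ}
    {L : ℝ} (hf_nonneg : ∀ n, 0 ≤ᵐ[μ] f n) (hf : ∀ n, Integrable (f n) μ)
    (h_mono : ∀ᵐ x ∂μ, Monotone fun n ↦ f n x)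
    (h_tendsto : ∀ᵐ x ∂μ, Tendsto (fun n ↦ f n x) atTop (𝓝 (F x)))
    (hL : Tendsto (fun n ↦ ∫ x, f n x ∂μ) atTop (𝓝 L)) : Integrable F μ := by
  have hF_nonneg : 0 ≤ᵐ[μ] F := by
    filter_upwards [hf_nonneg 0, h_mono, h_tendsto] with x h0 hx_mono hx_tendsto
    exact h0.trans (hx_mono.ge_of_tendsto hx_tendsto 0)
  have hlintegral : Tendsto (fun n ↦ ∫⁻ x, ENNReal.ofReal (f n x) ∂μ) atTop
      (𝓝 (∫⁻ x, ENNReal.ofReal (F x) ∂μ)) := by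
    refine lintegral_tendsto_of_tendsto_of_monotone
      (fun n ↦ (hf n).aemeasurable.ennreal_ofReal) ?_ ?_
    · filter_upwards [h_mono] with x hx using ENNReal.ofReal_mono.comp hx
    · filter_upwards [h_tendsto] with x hx using ENNReal.tendsto_ofReal hx
  have hlim : ∫⁻ x, ENNReal.ofReal (F x) ∂μ = ENNReal.ofReal L := by
    refine tendsto_nhds_unique hlintegral ?_
    simp_rw [← ofReal_integral_eq_lintegral_ofReal (hf _) (hf_nonneg _)]
    exact ENNReal.tendsto_ofReal hL
  refine ⟨aestronglyMeasurable_of_tendsto_ae _ (fun n ↦ (hf n).1) h_tendsto, ?_⟩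
  rw [hasFiniteIntegral_iff_ofReal hF_nonneg, hlim]
  exact ENNReal.ofReal_lt_top

lemma mgf_eq_of_tendsto_of_monotone {S : ℕ → α → ℝ} {T : α → ℝ} {u L : ℝ}
    (h_mono : ∀ᵐ x ∂μ, Monotone fun n ↦ S n x)
    (h_tendsto : ∀ᵐ x ∂μ, Tendsto (fun n ↦ S n x) atTop (𝓝 (T x)))
    (h_int : ∀ n, Integrable (fun x ↦ Real.exp (u * S n x)) μ)
    (hL : Tendsto (fun n ↦ mgf (S n) μ u) atTop (𝓝 L)) : mgf T μ u = L := by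
  have h_exp_tendsto : ∀ᵐ x ∂μ,
      Tendsto (fun n ↦ Real.exp (u * S n x)) atTop (𝓝 (Real.exp (u * T x))) := by
    filter_upwards [h_tendsto] with x hx using (hx.const_mul u).rexp
  refine tendsto_nhds_unique ?_ hL
  rcases le_total u 0 with hu | hu
  · have h_anti : ∀ᵐ x ∂μ, Antitone fun n ↦ Real.exp (u * S n x) := by
      filter_upwards [h_mono] with x hx m n hmn
      exact Real.exp_le_exp.mpr (mul_le_mul_of_nonpos_left (hx hmn) hu)
    have hT_int : Integrable (fun x ↦ Real.exp (u * T x)) μ := by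
      refine (h_int 0).mono' (aestronglyMeasurable_of_tendsto_ae _
        (fun n ↦ (h_int n).1) h_exp_tendsto) ?_
      filter_upwards [h_anti, h_exp_tendsto] with x hx_anti hx_tendsto
      rw [Real.norm_of_nonneg (Real.exp_pos _).le]
      exact hx_anti.le_of_tendsto hx_tendsto 0
    exact integral_tendsto_of_tendsto_of_antitone h_int hT_int h_anti h_exp_tendsto
  · have h_mono' : ∀ᵐ x ∂μ, Monotone fun n ↦ Real.exp (u * S n x) := by
      filter_upwards [h_mono] with x hx m n hmn
      exact Real.exp_le_exp.mpr (mul_le_mul_of_nonneg_left (hx hmn) hu)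
    have hT_int := integrable_of_tendsto_of_monotone_of_tendsto_integral
      (fun n ↦ ae_of_all _ fun x ↦ (Real.exp_pos _).le) h_int h_mono' h_exp_tendsto hL
    exact integral_tendsto_of_tendsto_of_monotone h_int hT_int h_mono' h_exp_tendsto

end MonotoneLimit

theorem hasProd_mgf_of_iIndepFun_expMeasure {Ω : Type*} [MeasurableSpace Ω] {P : Measure Ω}
    {a : ℕ → ℝ} (ha_pos : ∀ i, 0 < a i) (ha : Summable fun i ↦ (a i)⁻¹)
    {Y : ℕ → Ω → ℝ} (h_indep : iIndepFun Y P) (hY : ∀ i, P.map (Y i) = expMeasure (a i))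
    {S : Ω → ℝ} (hS : ∀ᵐ ω ∂P, HasSum (fun i ↦ Y i ω) (S ω)) {u : ℝ} (hu : ∀ i, u < a i) :
    HasProd (fun i ↦ a i / (a i - u)) (mgf S P u) := by
  have := h_indep.isProbabilityMeasure
  have hprod := (multipliable_div_sub_of_summable_inv (fun i ↦ (ha_pos i).ne') ha
    fun i ↦ (hu i).ne').hasProd
  have hmgf_partial : ∀ n, mgf (∑ i ∈ Finset.range n, Y i) P u =
      ∏ i ∈ Finset.range n, a i / (a i - u) := fun n ↦ by
    rw [h_indep.mgf_sum₀ fun i ↦ aemeasurable_of_map_eq_expMeasure (ha_pos i) (hY i)]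
    exact Finset.prod_congr rfl fun i _ ↦ mgf_of_map_eq_expMeasure (ha_pos i) (hu i) (hY i)
  have hY_nonneg : ∀ᵐ ω ∂P, ∀ i, 0 ≤ Y i ω :=
    ae_all_iff.mpr fun i ↦ ae_nonneg_of_map_eq_expMeasure (ha_pos i) (hY i)
  convert hprod using 1
  refine mgf_eq_of_tendsto_of_monotone (S := fun n ↦ ∑ i ∈ Finset.range n, Y i) ?_ ?_ ?_ ?_
  · filter_upwards [hY_nonneg] with ω hω
    simp only [Finset.sum_apply]
    exact (Finset.sum_mono_set_of_nonneg hω).comp Finset.range_mono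
  · filter_upwards [hS] with ω hω
    simpa only [Finset.sum_apply] using hω.tendsto_sum_nat
  · refine fun n ↦ mgf_pos_iff.mp ?_
    rw [hmgf_partial]
    exact Finset.prod_pos fun i _ ↦ div_pos (ha_pos i) (sub_pos.mpr (hu i))
  · simpa only [hmgf_partial] using hprod.tendsto_prod_nat

theorem hitting_time_mgf_general {Ω : Type*} [MeasurableSpace Ω]
    (P : Measure Ω)
    (lam : ℕ → ℝ) (hpos : ∀ n, 0 < lam n)
    (hsum : Summable fun n => (lam n)⁻¹)
    (X : ℕ → Ω → ℝ)
    (hindep : iIndepFun X P)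
    (hexp : ∀ i, Measure.map (X i) P = expMeasure (lam i))
    (T : ℕ → Ω → ℝ)
    (hT : ∀ᵐ ω ∂P, ∀ n, HasSum (fun i => X (n + 1 + i) ω) (T n ω)) :
    ∀ n : ℕ, ∀ u : ℝ, (∀ i, n < i → u < lam i) →
      HasProd (fun i : ℕ => lam (n + 1 + i) / (lam (n + 1 + i) - u))
        (∫ ω, Real.exp (u * T n ω) ∂P) := fun n u hu ↦
  hasProd_mgf_of_iIndepFun_expMeasure (fun i ↦ hpos _)
    (hsum.comp_injective (add_right_injective (n + 1)))
    (hindep.precomp (add_right_injective (n + 1))) (fun i ↦ hexp _)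
    (by filter_upwards [hT] with ω hω using hω n) (fun i ↦ hu _ (by omega))

theorem hitting_time_mgf {Ω : Type*} [MeasurableSpace Ω]
    (P : Measure Ω) [IsProbabilityMeasure P]
    (lam : ℕ → ℝ) (hpos : ∀ n, 0 < lam n)
    (hsum : Summable fun n => (lam n)⁻¹)
    (X : ℕ → Ω → ℝ) (hmeas : ∀ i, Measurable (X i))
    (hindep : iIndepFun X P)
    (hexp : ∀ i, Measure.map (X i) P = expMeasure (lam i))
    (T : ℕ → Ω → ℝ) (hTmeas : ∀ n, Measurable (T n))
    (hT : ∀ᵐ ω ∂P, ∀ n, HasSum (fun i => X (n + 1 + i) ω) (T n ω)) :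
    ∀ n : ℕ, ∀ u : ℝ, (∀ i, n < i → u < lam i) →
      HasProd (fun i : ℕ => lam (n + 1 + i) / (lam (n + 1 + i) - u))
        (∫ ω, Real.exp (u * T n ω) ∂P) :=
  hitting_time_mgf_general P lam hpos hsum X hindep hexp T hT
end

section
/- With notation as in the definition of $\tau$ and $I$ for fixed $\beta > 1$, the function $J(x) = x\,I(x^{\beta-1})$ is nonnegative and strictly convex on $(0,\infty)$ with $J(1)=0$. In particular, its derivative satisfies $J'(x) = R(x^{\beta-1})$ with $R(x) = (\beta-1)x\tau(x) + I(x)$, and $R'(x) = \tau'(x)\,r(\tau(x))$ where $r(u) = \int_1^\infty \frac{(y^\beta + u)\,dy}{((\beta-1)^{-1}y^\beta - u)^2} > 0$ for all $u < 1/(\beta-1)$. -/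
/-!
Let `F t = ∫_1^∞ ((β-1)⁻¹ y^β - t)⁻¹ dy` and `G t = ∫_1^∞ ((β-1)⁻¹ y^β - t)⁻² dy` for
`t < (β-1)⁻¹`. Then `F' = G > 0`, `F 0 = 1`, and `τ` is the inverse of `F`, so `τ 1 = 0` and
`τ' = 1 / G(τ)`. The integrand of `r u` has the antiderivative `-y / ((β-1)⁻¹ y^β - u)`, whence
`r u = ((β-1)⁻¹ - u)⁻¹ > 0`; this is the derivative of `t ↦ -log (1 - (β-1) t)`, and splitting
`y^β + t = (β-1) ((β-1)⁻¹ y^β - t) + β t` gives `r = (β-1) F + β t G`. With `F (τ x) = x` this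
yields `I' = τ`, so `R = -log (1 - (β-1) τ)` has `R' = τ' r(τ)`, and `J' = R(x^(β-1))` is strictly
increasing and vanishes at `1`: `J` is strictly convex with minimum `J 1 = 0`.
-/

open MeasureTheory Filter Topology Set

lemma HasDerivAt.mul_comp_rpow {f : ℝ → ℝ} {f' p x : ℝ} (hx : 0 < x)
    (hf : HasDerivAt f f' (x ^ p)) :
    HasDerivAt (fun x ↦ x * f (x ^ p)) (f (x ^ p) + p * x ^ p * f') x := by
  have hpow := Real.hasDerivAt_rpow_const (p := p) (Or.inl hx.ne')
  refine ((hasDerivAt_id x).mul (hf.comp x hpow)).congr_deriv ?_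
  rw [id, Function.comp_apply, Real.rpow_sub_one hx.ne']
  field_simp

lemma strictConvexOn_of_hasDerivAt {D : Set ℝ} (hD : Convex ℝ D) (hDo : IsOpen D) {f f' : ℝ → ℝ}
    (hf : ∀ x ∈ D, HasDerivAt f (f' x) x) (hf' : StrictMonoOn f' D) : StrictConvexOn ℝ D f := by
  refine StrictMonoOn.strictConvexOn_of_deriv hD
    (fun x hx ↦ (hf x hx).continuousAt.continuousWithinAt) ?_
  rw [hDo.interior_eq]
  exact hf'.congr fun x hx ↦ (hf x hx).deriv.symm

lemma ConvexOn.isMinOn_of_hasDerivAt_eq_zero {S : Set ℝ} {f : ℝ → ℝ} {x : ℝ} (hf : ConvexOn ℝ S f)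
    (hx : x ∈ interior S) (hf' : HasDerivAt f 0 x) : IsMinOn f S x :=
  hf.isMinOn_of_rightDeriv_eq_zero hx (hf'.hasDerivWithinAt.derivWithin (uniqueDiffWithinAt_Ioi x))

namespace RateFunction

variable {β t u m y : ℝ}

/-- In lemma names, `(β - 1)⁻¹ * y ^ β - t` is the denominator and its inverse the kernel. -/
noncomputable def F (β t : ℝ) : ℝ := ∫ y in Ici (1 : ℝ), ((β - 1)⁻¹ * y ^ β - t)⁻¹

noncomputable def G (β t : ℝ) : ℝ := ∫ y in Ici (1 : ℝ), ((β - 1)⁻¹ * y ^ β - t)⁻¹ ^ 2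

noncomputable def r (β u : ℝ) : ℝ :=
  ∫ y in Ici (1 : ℝ), (y ^ β + u) * ((β - 1)⁻¹ * y ^ β - u)⁻¹ ^ 2

lemma inv_sub_one_pos (hβ : 1 < β) : 0 < (β - 1)⁻¹ := inv_pos.2 (sub_pos.2 hβ)

lemma le_denom (hβ : 0 ≤ β) (htm : t ≤ m) (hy : 1 ≤ y) :
    ((β - 1)⁻¹ - max m 0) * y ^ β ≤ (β - 1)⁻¹ * y ^ β - t := by
  have hyβ : 1 ≤ y ^ β := Real.one_le_rpow hy hβ
  nlinarith [le_max_left m 0, le_max_right m 0]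

lemma denom_pos (hβ : 1 < β) (ht : t < (β - 1)⁻¹) (hy : 1 ≤ y) :
    0 < (β - 1)⁻¹ * y ^ β - t := by
  have hK : 0 < (β - 1)⁻¹ - max t 0 := sub_pos.2 (max_lt ht (inv_sub_one_pos hβ))
  exact lt_of_lt_of_le (mul_pos hK (by positivity)) (le_denom (by linarith) le_rfl hy)

lemma continuous_denom (hβ : 0 ≤ β) : Continuous fun y : ℝ ↦ (β - 1)⁻¹ * y ^ β - t :=
  (continuous_const.mul (Real.continuous_rpow_const hβ)).sub continuous_const

lemma kernel_pow_le (hβ : 1 < β) (n : ℕ) (htm : t ≤ m) (hm : m < (β - 1)⁻¹) (hy : 1 ≤ y) :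
    ((β - 1)⁻¹ * y ^ β - t)⁻¹ ^ n ≤ (((β - 1)⁻¹ - max m 0) ^ n)⁻¹ * y ^ (-(n * β)) := by
  have hK : 0 < (β - 1)⁻¹ - max m 0 := sub_pos.2 (max_lt hm (inv_sub_one_pos hβ))
  have hy0 : 0 < y := zero_lt_one.trans_le hy
  calc ((β - 1)⁻¹ * y ^ β - t)⁻¹ ^ n
      ≤ (((β - 1)⁻¹ - max m 0) * y ^ β)⁻¹ ^ n := by
        have hD := denom_pos hβ (htm.trans_lt hm) hy
        exact pow_le_pow_left₀ (inv_pos.2 hD).le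
          (inv_anti₀ (mul_pos hK (by positivity)) (le_denom (by linarith) htm hy)) n
    _ = (((β - 1)⁻¹ - max m 0) ^ n)⁻¹ * y ^ (-(n * β)) := by
        rw [Real.rpow_neg hy0.le, mul_comm (n : ℝ), Real.rpow_mul_natCast hy0.le, mul_inv,
          mul_pow, inv_pow, inv_pow]

lemma integrableOn_kernel_pow (hβ : 1 < β) {n : ℕ} (hn : n ≠ 0) (ht : t < (β - 1)⁻¹) :
    IntegrableOn (fun y : ℝ ↦ ((β - 1)⁻¹ * y ^ β - t)⁻¹ ^ n) (Ici 1) := by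
  have hnβ : 1 < (n : ℝ) * β :=
    one_lt_mul_of_le_of_lt (by exact_mod_cast Nat.one_le_iff_ne_zero.2 hn) hβ
  have hbound : IntegrableOn (fun y : ℝ ↦ y ^ (-(n * β))) (Ici 1) :=
    (integrableOn_Ici_iff_integrableOn_Ioi).2 (integrableOn_Ioi_rpow_of_lt (by linarith) one_pos)
  refine (hbound.const_mul (((β - 1)⁻¹ - max t 0) ^ n)⁻¹).mono'
    ((continuous_denom (by linarith)).measurable.inv.pow_const n).aestronglyMeasurable ?_
  filter_upwards [ae_restrict_mem measurableSet_Ici] with y hy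
  rw [Real.norm_of_nonneg (pow_nonneg (inv_pos.2 (denom_pos hβ ht hy)).le n)]
  exact kernel_pow_le hβ n le_rfl ht hy

lemma integrableOn_kernel (hβ : 1 < β) (ht : t < (β - 1)⁻¹) :
    IntegrableOn (fun y : ℝ ↦ ((β - 1)⁻¹ * y ^ β - t)⁻¹) (Ici 1) := by
  simpa using integrableOn_kernel_pow hβ one_ne_zero ht

lemma integral_kernel_pow_pos (hβ : 1 < β) {n : ℕ} (hn : n ≠ 0) (ht : t < (β - 1)⁻¹) :
    0 < ∫ y in Ici (1 : ℝ), ((β - 1)⁻¹ * y ^ β - t)⁻¹ ^ n := by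
  have hpos : ∀ y ∈ Ici (1 : ℝ), 0 < ((β - 1)⁻¹ * y ^ β - t)⁻¹ ^ n := fun y hy ↦
    pow_pos (inv_pos.2 (denom_pos hβ ht hy)) n
  refine (setIntegral_pos_iff_support_of_nonneg_ae
    ((ae_restrict_mem measurableSet_Ici).mono fun y hy ↦ (hpos y hy).le)
    (integrableOn_kernel_pow hβ hn ht)).2 ?_
  have hsupp : Ici (1 : ℝ) ⊆ Function.support fun y ↦ ((β - 1)⁻¹ * y ^ β - t)⁻¹ ^ n :=
    fun y hy ↦ (hpos y hy).ne'
  rw [inter_eq_right.2 hsupp]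
  simp

lemma F_pos (hβ : 1 < β) (ht : t < (β - 1)⁻¹) : 0 < F β t := by
  simpa [F] using integral_kernel_pow_pos hβ one_ne_zero ht

lemma G_pos (hβ : 1 < β) (ht : t < (β - 1)⁻¹) : 0 < G β t :=
  integral_kernel_pow_pos hβ two_ne_zero ht

lemma F_zero (hβ : 1 < β) : F β 0 = 1 := by
  have hpt : ∀ y ∈ Ici (1 : ℝ), ((β - 1)⁻¹ * y ^ β - 0)⁻¹ = (β - 1) * y ^ (-β) := fun y hy ↦ by
    rw [sub_zero, mul_inv, inv_inv, Real.rpow_neg (zero_le_one.trans hy)]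
  rw [F, setIntegral_congr_fun measurableSet_Ici hpt, integral_const_mul,
    integral_Ici_eq_integral_Ioi, integral_Ioi_rpow_of_lt (by linarith) one_pos, Real.one_rpow]
  have : -β + 1 ≠ 0 := by linarith
  field_simp
  ring

lemma hasDerivAt_F (hβ : 1 < β) (ht : t < (β - 1)⁻¹) : HasDerivAt (F β) (G β t) t := by
  set ε := ((β - 1)⁻¹ - t) / 2
  have hε : 0 < ε := by simp only [ε]; linarith
  have hm : t + ε < (β - 1)⁻¹ := by simp only [ε]; linarith
  have hball : ∀ s ∈ Metric.ball t ε, s ≤ t + ε := fun s hs ↦ by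
    rw [Real.ball_eq_Ioo] at hs; exact hs.2.le
  refine (hasDerivAt_integral_of_dominated_loc_of_deriv_le (Metric.ball_mem_nhds t hε)
    (F := fun s y ↦ ((β - 1)⁻¹ * y ^ β - s)⁻¹) (F' := fun s y ↦ ((β - 1)⁻¹ * y ^ β - s)⁻¹ ^ 2)
    (Eventually.of_forall fun s ↦ (continuous_denom (t := s) (by linarith)).measurable.inv
      |>.aestronglyMeasurable)
    (integrableOn_kernel hβ ht)
    ((continuous_denom (by linarith)).measurable.inv.pow_const 2).aestronglyMeasurable
    (bound := fun y ↦ (((β - 1)⁻¹ - max (t + ε) 0) ^ 2)⁻¹ * y ^ (-((2 : ℕ) * β))) ?_ ?_ ?_).2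
  · filter_upwards [ae_restrict_mem measurableSet_Ici] with y hy s hs
    rw [Real.norm_of_nonneg (pow_nonneg
      (inv_pos.2 (denom_pos hβ ((hball s hs).trans_lt hm) hy)).le 2)]
    exact kernel_pow_le hβ 2 (hball s hs) hm hy
  · have h2β : 1 < ((2 : ℕ) : ℝ) * β := by push_cast; linarith
    exact ((integrableOn_Ici_iff_integrableOn_Ioi).2
      (integrableOn_Ioi_rpow_of_lt (by linarith) one_pos)).const_mul _
  · filter_upwards [ae_restrict_mem measurableSet_Ici] with y hy s hs
    have hD := denom_pos hβ ((hball s hs).trans_lt hm) hy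
    have h := ((hasDerivAt_id s).const_sub ((β - 1)⁻¹ * y ^ β)).fun_inv hD.ne'
    simpa only [id, neg_neg, one_div, inv_pow] using h

lemma F_strictMonoOn (hβ : 1 < β) : StrictMonoOn (F β) (Iio (β - 1)⁻¹) := by
  refine strictMonoOn_of_deriv_pos (convex_Iio _)
    (fun t ht ↦ (hasDerivAt_F hβ ht).continuousAt.continuousWithinAt) fun t ht ↦ ?_
  rw [interior_Iio] at ht
  rw [(hasDerivAt_F hβ ht).deriv]
  exact G_pos hβ ht

lemma rpow_add_mul_kernel_sq (hβ : 1 < β) :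
    (y ^ β + t) * ((β - 1)⁻¹ * y ^ β - t)⁻¹ ^ 2
      = (β - 1) * ((β - 1)⁻¹ * y ^ β - t)⁻¹ + β * t * ((β - 1)⁻¹ * y ^ β - t)⁻¹ ^ 2 := by
  have hβ1 : β - 1 ≠ 0 := by linarith
  have hsplit : y ^ β + t = (β - 1) * ((β - 1)⁻¹ * y ^ β - t) + β * t := by
    field_simp
    ring
  rw [hsplit]
  field_simp

lemma integrableOn_r_integrand (hβ : 1 < β) (hu : u < (β - 1)⁻¹) :
    IntegrableOn (fun y : ℝ ↦ (y ^ β + u) * ((β - 1)⁻¹ * y ^ β - u)⁻¹ ^ 2) (Ici 1) := by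
  simp_rw [rpow_add_mul_kernel_sq hβ]
  exact ((integrableOn_kernel hβ hu).const_mul _).add
    ((integrableOn_kernel_pow hβ two_ne_zero hu).const_mul _)

lemma r_eq_F_add_G (hβ : 1 < β) (ht : t < (β - 1)⁻¹) :
    r β t = (β - 1) * F β t + β * t * G β t := by
  simp_rw [r, rpow_add_mul_kernel_sq hβ]
  rw [integral_add ((integrableOn_kernel hβ ht).const_mul _)
      ((integrableOn_kernel_pow hβ two_ne_zero ht).const_mul _),
    integral_const_mul, integral_const_mul, F, G]

lemma hasDerivAt_neg_div_denom (hβ : 1 < β) (hy : 0 < y) (hD : (β - 1)⁻¹ * y ^ β - u ≠ 0) :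
    HasDerivAt (fun y : ℝ ↦ -(y / ((β - 1)⁻¹ * y ^ β - u)))
      ((y ^ β + u) * ((β - 1)⁻¹ * y ^ β - u)⁻¹ ^ 2) y := by
  have hden : HasDerivAt (fun y : ℝ ↦ (β - 1)⁻¹ * y ^ β - u)
      ((β - 1)⁻¹ * (β * y ^ (β - 1))) y :=
    ((Real.hasDerivAt_rpow_const (Or.inl hy.ne')).const_mul _).sub_const u
  refine ((hasDerivAt_id y).fun_div hden hD).fun_neg.congr_deriv ?_
  have hβ1 : β - 1 ≠ 0 := by linarith
  rw [id, Real.rpow_sub hy, Real.rpow_one]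
  field_simp
  ring

lemma tendsto_div_denom_atTop (hβ : 1 < β) :
    Tendsto (fun y : ℝ ↦ y / ((β - 1)⁻¹ * y ^ β - u)) atTop (𝓝 0) := by
  have hgrow : Tendsto (fun y : ℝ ↦ (β - 1)⁻¹ * y ^ (β - 1) - u / y) atTop atTop := by
    have hpow : Tendsto (fun y : ℝ ↦ (β - 1)⁻¹ * y ^ (β - 1)) atTop atTop :=
      (tendsto_rpow_atTop (sub_pos.2 hβ)).const_mul_atTop (inv_sub_one_pos hβ)
    have hdiv : Tendsto (fun y : ℝ ↦ -(u / y)) atTop (𝓝 0) := by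
      simpa using (tendsto_const_nhds (x := u)).div_atTop tendsto_id |>.neg
    exact (hpow.atTop_add hdiv).congr fun y ↦ (sub_eq_add_neg _ _).symm
  refine (tendsto_inv_atTop_zero.comp hgrow).congr' ?_
  filter_upwards [eventually_gt_atTop 0] with y hy
  rw [Function.comp_apply, Real.rpow_sub_one hy.ne']
  field_simp

lemma r_eq_inv (hβ : 1 < β) (hu : u < (β - 1)⁻¹) : r β u = ((β - 1)⁻¹ - u)⁻¹ := by
  have hderiv : ∀ y ∈ Ici (1 : ℝ), HasDerivAt (fun y : ℝ ↦ -(y / ((β - 1)⁻¹ * y ^ β - u)))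
      ((y ^ β + u) * ((β - 1)⁻¹ * y ^ β - u)⁻¹ ^ 2) y := fun y hy ↦
    hasDerivAt_neg_div_denom hβ (zero_lt_one.trans_le hy) (denom_pos hβ hu hy).ne'
  rw [r, integral_Ici_eq_integral_Ioi, integral_Ioi_of_hasDerivAt_of_tendsto' hderiv
    ((integrableOn_r_integrand hβ hu).mono_set Ioi_subset_Ici_self)
    (by simpa using (tendsto_div_denom_atTop (u := u) hβ).neg)]
  simp

lemma r_pos (hβ : 1 < β) (hu : u < (β - 1)⁻¹) : 0 < r β u := by
  rw [r_eq_inv hβ hu]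
  exact inv_pos.2 (sub_pos.2 hu)

lemma hasDerivAt_neg_log_one_sub (hβ : 1 < β) (ht : t < (β - 1)⁻¹) :
    HasDerivAt (fun t ↦ -Real.log (1 - (β - 1) * t)) (r β t) t := by
  have hβ1 : β - 1 ≠ 0 := by linarith
  have hpos : 0 < 1 - (β - 1) * t := by
    have := mul_lt_mul_of_pos_left ht (sub_pos.2 hβ)
    rw [mul_inv_cancel₀ hβ1] at this
    linarith
  refine (((hasDerivAt_id t).const_mul (β - 1)).const_sub 1).log hpos.ne' |>.neg.congr_deriv ?_
  have : (β - 1)⁻¹ - t ≠ 0 := by linarith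
  rw [r_eq_inv hβ ht, id]
  field_simp

lemma strictMonoOn_neg_log_one_sub (hβ : 1 < β) :
    StrictMonoOn (fun t ↦ -Real.log (1 - (β - 1) * t)) (Iio (β - 1)⁻¹) := by
  refine strictMonoOn_of_deriv_pos (convex_Iio _)
    (fun t ht ↦ (hasDerivAt_neg_log_one_sub hβ ht).continuousAt.continuousWithinAt) fun t ht ↦ ?_
  rw [interior_Iio] at ht
  rw [(hasDerivAt_neg_log_one_sub hβ ht).deriv]
  exact r_pos hβ ht

section Inverse

variable {τ : ℝ → ℝ} {x : ℝ}

lemma strictMonoOn_of_F_right_inv (hβ : 1 < β) (hτlt : ∀ x > 0, τ x < (β - 1)⁻¹)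
    (hτ : ∀ x > 0, F β (τ x) = x) : StrictMonoOn τ (Ioi 0) := by
  intro x hx x' hx' hlt
  by_contra! hle
  have := (F_strictMonoOn hβ).monotoneOn (hτlt x' hx') (hτlt x hx) hle
  rw [hτ x hx, hτ x' hx'] at this
  exact hlt.not_ge this

lemma image_of_F_right_inv (hβ : 1 < β) (hτlt : ∀ x > 0, τ x < (β - 1)⁻¹)
    (hτ : ∀ x > 0, F β (τ x) = x) : τ '' Ioi 0 = Iio (β - 1)⁻¹ := by
  refine Subset.antisymm (by rintro _ ⟨x, hx, rfl⟩; exact hτlt x hx) fun t (ht : t < _) ↦ ?_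
  refine ⟨F β t, F_pos hβ ht, ?_⟩
  exact (F_strictMonoOn hβ).injOn (hτlt _ (F_pos hβ ht)) ht (hτ _ (F_pos hβ ht))

lemma hasDerivAt_of_F_right_inv (hβ : 1 < β) (hτlt : ∀ x > 0, τ x < (β - 1)⁻¹)
    (hτ : ∀ x > 0, F β (τ x) = x) (hx : 0 < x) :
    HasDerivAt τ (G β (τ x))⁻¹ x := by
  have hcont : ContinuousAt τ x :=
    (strictMonoOn_of_F_right_inv hβ hτlt hτ).continuousAt_of_image_mem_nhds (Ioi_mem_nhds hx)
      (image_of_F_right_inv hβ hτlt hτ ▸ Iio_mem_nhds (hτlt x hx))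
  exact HasDerivAt.of_local_left_inverse hcont (hasDerivAt_F hβ (hτlt x hx))
    (G_pos hβ (hτlt x hx)).ne' (eventually_of_mem (Ioi_mem_nhds hx) hτ)

lemma apply_one_eq_zero_of_F_right_inv (hβ : 1 < β) (hτlt : ∀ x > 0, τ x < (β - 1)⁻¹)
    (hτ : ∀ x > 0, F β (τ x) = x) : τ 1 = 0 :=
  (F_strictMonoOn hβ).injOn (hτlt 1 one_pos) (inv_sub_one_pos hβ)
    ((hτ 1 one_pos).trans (F_zero hβ).symm)

lemma hasDerivAt_neg_log_one_sub_comp (hβ : 1 < β) (hτlt : ∀ x > 0, τ x < (β - 1)⁻¹)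
    (hτ : ∀ x > 0, F β (τ x) = x) (hx : 0 < x) :
    HasDerivAt (fun x ↦ -Real.log (1 - (β - 1) * τ x)) ((G β (τ x))⁻¹ * r β (τ x)) x := by
  rw [mul_comm]
  exact (hasDerivAt_neg_log_one_sub hβ (hτlt x hx)).comp x
    (hasDerivAt_of_F_right_inv hβ hτlt hτ hx)

lemma hasDerivAt_rateFunction (hβ : 1 < β) (hτlt : ∀ x > 0, τ x < (β - 1)⁻¹)
    (hτ : ∀ x > 0, F β (τ x) = x) (hx : 0 < x) :
    HasDerivAt (fun x ↦ -((β - 1) * x * τ x) - Real.log (1 - (β - 1) * τ x)) (τ x) x := by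
  have hG := (G_pos hβ (hτlt x hx)).ne'
  have hlin := ((hasDerivAt_id x).const_mul (β - 1)).mul (hasDerivAt_of_F_right_inv hβ hτlt hτ hx)
  refine (hlin.neg.add (hasDerivAt_neg_log_one_sub_comp hβ hτlt hτ hx)).congr_deriv ?_
  rw [r_eq_F_add_G hβ (hτlt x hx), hτ x hx, id]
  field_simp
  ring

end Inverse

end RateFunction

theorem rate_function_J_properties (β : ℝ) (hβ : 1 < β)
    (τ : ℝ → ℝ) (hτlt : ∀ x > 0, τ x < (β - 1)⁻¹)
    (hτ : ∀ x > 0, (∫ y in Set.Ici (1 : ℝ), ((β - 1)⁻¹ * y ^ β - τ x)⁻¹) = x)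
    (I : ℝ → ℝ)
    (hI : ∀ x, I x = -((β - 1) * x * τ x) - Real.log (1 - (β - 1) * τ x))
    (J : ℝ → ℝ) (hJ : ∀ x, J x = x * I (x ^ (β - 1)))
    (R : ℝ → ℝ) (hR : ∀ x, R x = (β - 1) * x * τ x + I x)
    (r : ℝ → ℝ)
    (hr : ∀ u, r u = ∫ y in Set.Ici (1 : ℝ),
      (y ^ β + u) * (((β - 1)⁻¹ * y ^ β - u)⁻¹) ^ 2) :
    (∀ x > 0, 0 ≤ J x) ∧ StrictConvexOn ℝ (Set.Ioi 0) J ∧ J 1 = 0 ∧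
    (∀ x > 0, HasDerivAt J (R (x ^ (β - 1))) x) ∧
    (∀ u < (β - 1)⁻¹, 0 < r u) ∧
    (∀ x > 0, deriv R x = deriv τ x * r (τ x)) := by
  obtain rfl : r = RateFunction.r β := funext hr
  have hIeq : I = fun x ↦ -((β - 1) * x * τ x) - Real.log (1 - (β - 1) * τ x) := funext hI
  have hReq : R = fun x ↦ -Real.log (1 - (β - 1) * τ x) := funext fun x ↦ by rw [hR, hI]; ring
  have hτ1 : τ 1 = 0 := RateFunction.apply_one_eq_zero_of_F_right_inv hβ hτlt hτ
  have hJ' : ∀ x > 0, HasDerivAt J (R (x ^ (β - 1))) x := fun x hx ↦ by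
    rw [funext hJ, hReq, hIeq]
    have hI' := RateFunction.hasDerivAt_rateFunction hβ hτlt hτ (Real.rpow_pos_of_pos hx (β - 1))
    exact (hI'.mul_comp_rpow hx).congr_deriv (by ring)
  have hR_mono : StrictMonoOn (fun x ↦ R (x ^ (β - 1))) (Ioi 0) := by
    intro x (hx : 0 < x) x' (hx' : 0 < x') hlt
    have hz := Real.rpow_pos_of_pos hx (β - 1)
    have hz' := Real.rpow_pos_of_pos hx' (β - 1)
    simp only [hReq]
    refine RateFunction.strictMonoOn_neg_log_one_sub hβ (hτlt _ hz) (hτlt _ hz') ?_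
    exact RateFunction.strictMonoOn_of_F_right_inv hβ hτlt hτ hz hz'
      (Real.rpow_lt_rpow hx.le hlt (sub_pos.2 hβ))
  have hconv : StrictConvexOn ℝ (Ioi 0) J :=
    strictConvexOn_of_hasDerivAt (convex_Ioi 0) isOpen_Ioi hJ' hR_mono
  have hJ1 : J 1 = 0 := by simp [hJ, hI, hτ1]
  have hmin : IsMinOn J (Ioi 0) 1 := hconv.convexOn.isMinOn_of_hasDerivAt_eq_zero (by simp)
    (by simpa [hReq, hτ1] using hJ' 1 one_pos)
  refine ⟨fun x hx ↦ hJ1 ▸ hmin hx, hconv, hJ1, hJ', fun u hu ↦ RateFunction.r_pos hβ hu,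
    fun x hx ↦ ?_⟩
  rw [hReq, (RateFunction.hasDerivAt_neg_log_one_sub_comp hβ hτlt hτ hx).deriv,
    (RateFunction.hasDerivAt_of_F_right_inv hβ hτlt hτ hx).deriv]
end

section
/- Fix $\beta > 1$ and define $I(x) = -(\beta-1)x\tau(x) - \ln(1-(\beta-1)\tau(x))$ where $\tau(x)$ solves $\int_1^\infty ((\beta-1)^{-1}y^\beta - \tau)^{-1}dy = x$. Then $I(x)/x \to 1/(\beta-1)$ as $x \to \infty$, and consequently $J(x) = xI(x^{\beta-1})$ satisfies $J(x)/x^\beta \to 1/(\beta-1)$ as $x \to \infty$. -/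
/-!
Put `h = 1 - (β - 1) τ(x)`. The equation defining `τ` becomes `G(h) = x / (β - 1)` with
`G(h) = ∫₁^∞ (y^β - 1 + h)⁻¹ dy`, and `I(x) / x = h - 1 - log h / x`. Near `y = 1` the
denominator is squeezed between `β (y - 1) + h` and `y^(β-1) (β (y - 1) + h)`, which gives
`G(h) = -log h / β + O(1)` as `h → 0⁺`. As `G` is antitone and `G(h(x)) → ∞`, `h(x) → 0`, so
`-log h / x → β / (β - 1)` and `I(x) / x → 1 / (β - 1)`. The claim for `J` is the substitution
`x ↦ x^(β-1)`.
-/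

open MeasureTheory Filter Topology Set Real

noncomputable def shiftedPowerIntegral (β h : ℝ) : ℝ :=
  ∫ y in Ici (1 : ℝ), (y ^ β - 1 + h)⁻¹

section
variable {β h y : ℝ}

lemma integrableOn_inv_rpow_sub_one_add (hβ : 1 < β) (hh : 0 < h) :
    IntegrableOn (fun y : ℝ => (y ^ β - 1 + h)⁻¹) (Ici 1) := by
  rw [integrableOn_Ici_iff_integrableOn_Ioi]
  refine ((integrableOn_Ioi_rpow_of_lt (neg_lt_neg hβ) one_pos).const_mul
    (min h 1)⁻¹).mono' (by fun_prop) ?_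
  filter_upwards [ae_restrict_mem measurableSet_Ioi] with y hy
  have hyβ : 1 ≤ y ^ β := one_le_rpow (le_of_lt hy) (by linarith)
  have hm : 0 < min h 1 := lt_min hh one_pos
  have hle : min h 1 * y ^ β ≤ y ^ β - 1 + h := by
    nlinarith [min_le_left h 1, min_le_right h 1]
  rw [norm_inv, norm_of_nonneg (by linarith), rpow_neg (by linarith [mem_Ioi.1 hy]), ← mul_inv]
  exact inv_anti₀ (by positivity) hle

lemma shiftedPowerIntegral_antitoneOn (hβ : 1 < β) :
    AntitoneOn (shiftedPowerIntegral β) (Ioi 0) := fun a ha b hb hab =>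
  setIntegral_mono_on (integrableOn_inv_rpow_sub_one_add hβ hb)
    (integrableOn_inv_rpow_sub_one_add hβ ha) measurableSet_Ici fun y hy =>
    inv_anti₀ (by linarith [one_le_rpow (mem_Ici.1 hy) (by linarith : (0 : ℝ) ≤ β), mem_Ioi.1 ha])
      (by linarith)

lemma integral_inv_mul_sub_one_add (hβ : 0 < β) (hh : 0 < h) :
    ∫ y in (1 : ℝ)..2, (β * (y - 1) + h)⁻¹ = (log (β + h) - log h) / β := by
  have hsubst := intervalIntegral.integral_comp_mul_add (fun x : ℝ => x⁻¹) hβ.ne' (h - β)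
    (a := 1) (b := 2)
  rw [show β * 2 + (h - β) = β + h by ring, show β * 1 + (h - β) = h by ring,
    integral_inv_of_pos hh (by linarith), smul_eq_mul] at hsubst
  simp_rw [show ∀ y, β * (y - 1) + h = β * y + (h - β) from fun y => by ring]
  rw [hsubst, log_div (by linarith) hh.ne', div_eq_inv_mul]

lemma rpow_sub_one_le_mul_rpow_sub_one_mul (hβ : 1 ≤ β) (hy : 0 < y) :
    y ^ β - 1 ≤ β * y ^ (β - 1) * (y - 1) := by
  have hbern := one_add_mul_self_le_rpow_one_add (s := y⁻¹ - 1)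
    (by linarith [inv_pos.2 hy]) hβ
  rw [add_sub_cancel, inv_rpow hy.le] at hbern
  have hz : 0 < y ^ β := rpow_pos_of_pos hy β
  have hmul := mul_le_mul_of_nonneg_left hbern hz.le
  rw [mul_inv_cancel₀ hz.ne'] at hmul
  rw [rpow_sub_one hy.ne',
    show β * (y ^ β / y) * (y - 1) = β * y ^ β - β * y ^ β * y⁻¹ by field_simp]
  nlinarith

lemma inv_rpow_sub_one_add_le (hβ : 1 ≤ β) (hh : 0 < h) (hy : 1 ≤ y) :
    (y ^ β - 1 + h)⁻¹ ≤ (β * (y - 1) + h)⁻¹ := by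
  have hbern := one_add_mul_self_le_rpow_one_add (s := y - 1) (by linarith) hβ
  rw [add_sub_cancel] at hbern
  exact inv_anti₀ (by nlinarith) (by linarith)

lemma inv_rpow_sub_one_add_le_two_mul (hβ : 1 ≤ β) (hh : 0 ≤ h) (hy : 2 ≤ y) :
    (y ^ β - 1 + h)⁻¹ ≤ 2 * y ^ (-β) := by
  have hyβ : y ≤ y ^ β := by
    simpa using rpow_le_rpow_of_exponent_le (by linarith : (1 : ℝ) ≤ y) hβ
  rw [rpow_neg (by linarith), ← inv_inv 2, ← mul_inv]
  exact inv_anti₀ (by positivity) (by linarith)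

lemma inv_mul_sub_one_add_sub_le (hβ : 1 < β) (hh : 0 < h) (hy : 1 ≤ y) :
    (β * (y - 1) + h)⁻¹ - (β - 1) / β ≤ (y ^ β - 1 + h)⁻¹ := by
  have hy0 : 0 < y := by linarith
  set z := y ^ (β - 1)
  have hz : 1 ≤ z := one_le_rpow hy (by linarith)
  have hd : 0 < β * (y - 1) + h := by nlinarith
  have htangent : y ^ β - 1 + h ≤ z * (β * (y - 1) + h) := by
    nlinarith [rpow_sub_one_le_mul_rpow_sub_one_mul hβ.le hy0]
  have hinv : z⁻¹ * (β * (y - 1) + h)⁻¹ ≤ (y ^ β - 1 + h)⁻¹ := by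
    rw [← mul_inv]
    exact inv_anti₀ (by linarith [one_le_rpow hy (by linarith : (0 : ℝ) ≤ β)]) htangent
  have hz_inv : 1 - (β - 1) * (y - 1) ≤ z⁻¹ := by
    have h1 := one_sub_inv_le_log_of_pos (by positivity : 0 < z)
    rw [log_rpow hy0] at h1
    nlinarith [log_le_sub_one_of_pos hy0]
  have hfrac : (y - 1) * (β * (y - 1) + h)⁻¹ ≤ β⁻¹ := by
    rw [← div_eq_mul_inv, div_le_iff₀ hd]
    field_simp
    nlinarith
  calc (β * (y - 1) + h)⁻¹ - (β - 1) / β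
      ≤ (β * (y - 1) + h)⁻¹ - (β - 1) * ((y - 1) * (β * (y - 1) + h)⁻¹) := by
        rw [div_eq_mul_inv]; gcongr
    _ = (1 - (β - 1) * (y - 1)) * (β * (y - 1) + h)⁻¹ := by ring
    _ ≤ z⁻¹ * (β * (y - 1) + h)⁻¹ := by gcongr
    _ ≤ _ := hinv

lemma intervalIntegrable_inv_mul_sub_one_add (hβ : 0 < β) (hh : 0 < h) :
    IntervalIntegrable (fun y : ℝ => (β * (y - 1) + h)⁻¹) volume 1 2 := by
  refine ContinuousOn.intervalIntegrable (ContinuousOn.inv₀ (by fun_prop) fun y hy => ?_)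
  rw [uIcc_of_le one_le_two] at hy
  nlinarith [hy.1]

lemma shiftedPowerIntegral_le (hβ : 1 < β) (hh : 0 < h) :
    shiftedPowerIntegral β h ≤ (log (β + h) - log h) / β + ∫ y in Ioi (2 : ℝ), 2 * y ^ (-β) := by
  have hint := integrableOn_inv_rpow_sub_one_add hβ hh
  have hsub : Ioc (1 : ℝ) 2 ⊆ Ici 1 := fun y hy => le_of_lt hy.1
  rw [shiftedPowerIntegral, integral_Ici_eq_integral_Ioi, ← Ioc_union_Ioi_eq_Ioi one_le_two,
    setIntegral_union Ioc_disjoint_Ioi_same measurableSet_Ioi (hint.mono_set hsub)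
      (hint.mono_set (Ioi_subset_Ici one_le_two)),
    ← intervalIntegral.integral_of_le one_le_two, ← integral_inv_mul_sub_one_add (by linarith) hh]
  refine add_le_add ?_ ?_
  · exact intervalIntegral.integral_mono_on one_le_two
      ((intervalIntegrable_iff_integrableOn_Ioc_of_le one_le_two).2
        (hint.mono_set hsub))
      (intervalIntegrable_inv_mul_sub_one_add (by linarith) hh)
      fun y hy => inv_rpow_sub_one_add_le hβ.le hh hy.1
  · exact setIntegral_mono_on (hint.mono_set (Ioi_subset_Ici one_le_two))
      ((integrableOn_Ioi_rpow_of_lt (neg_lt_neg hβ) two_pos).const_mul 2) measurableSet_Ioi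
      fun y hy => inv_rpow_sub_one_add_le_two_mul hβ.le hh.le (le_of_lt hy)

lemma le_shiftedPowerIntegral (hβ : 1 < β) (hh : 0 < h) :
    (log (β + h) - log h) / β - (β - 1) / β ≤ shiftedPowerIntegral β h := by
  have hint := integrableOn_inv_rpow_sub_one_add hβ hh
  have hsub : Ioc (1 : ℝ) 2 ⊆ Ici 1 := fun y hy => le_of_lt hy.1
  calc (log (β + h) - log h) / β - (β - 1) / β
      = ∫ y in (1 : ℝ)..2, ((β * (y - 1) + h)⁻¹ - (β - 1) / β) := by
        rw [intervalIntegral.integral_sub (intervalIntegrable_inv_mul_sub_one_add (by linarith) hh)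
          intervalIntegrable_const, integral_inv_mul_sub_one_add (by linarith) hh,
          intervalIntegral.integral_const]
        norm_num
    _ ≤ ∫ y in (1 : ℝ)..2, (y ^ β - 1 + h)⁻¹ :=
        intervalIntegral.integral_mono_on one_le_two
          ((intervalIntegrable_inv_mul_sub_one_add (by linarith) hh).sub intervalIntegrable_const)
          ((intervalIntegrable_iff_integrableOn_Ioc_of_le one_le_two).2
            (hint.mono_set hsub))
          fun y hy => inv_mul_sub_one_add_sub_le hβ hh hy.1
    _ ≤ shiftedPowerIntegral β h := by
        rw [intervalIntegral.integral_of_le one_le_two]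
        refine setIntegral_mono_set hint ?_ hsub.eventuallyLE
        filter_upwards [ae_restrict_mem measurableSet_Ici] with y hy
        exact inv_nonneg.2 (by linarith [one_le_rpow (mem_Ici.1 hy) (by linarith : (0 : ℝ) ≤ β)])

end

lemma shiftedPowerIntegral_add_log_div_isBigO {β : ℝ} (hβ : 1 < β) :
    (fun h => shiftedPowerIntegral β h + log h / β) =O[𝓝[>] 0] fun _ => (1 : ℝ) := by
  set C := ∫ y in Ioi (2 : ℝ), 2 * y ^ (-β)
  refine .of_bound (max |log β / β - (β - 1) / β| |log (β + 1) / β + C|) ?_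
  filter_upwards [Ioo_mem_nhdsGT one_pos] with h hh
  have hlower := le_shiftedPowerIntegral hβ hh.1
  have hupper := shiftedPowerIntegral_le hβ hh.1
  have hlog₁ : log β / β ≤ log (β + h) / β := by
    gcongr
    linarith [hh.1]
  have hlog₂ : log (β + h) / β ≤ log (β + 1) / β := by
    gcongr
    · linarith [hh.1]
    · linarith [hh.2]
  rw [sub_div] at hlower hupper
  rw [norm_one, mul_one, norm_eq_abs]
  exact abs_le_max_abs_abs (by linarith) (by linarith)

lemma AntitoneOn.tendsto_nhdsGT_zero_of_tendsto_atTop {α : Type*} {l : Filter α} {f : ℝ → ℝ}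
    {u : α → ℝ} (hf : AntitoneOn f (Ioi 0)) (hu : ∀ᶠ x in l, 0 < u x)
    (hfu : Tendsto (f ∘ u) l atTop) : Tendsto u l (𝓝[>] 0) := by
  refine tendsto_nhdsWithin_iff.2 ⟨tendsto_order.2 ⟨fun a ha => hu.mono fun x hx => ha.trans hx,
    fun ε hε => ?_⟩, hu⟩
  filter_upwards [hfu.eventually_gt_atTop (f ε), hu] with x hfx hux
  exact lt_of_not_ge fun hle => (hf hε hux hle).not_gt hfx

lemma integral_inv_inv_mul_rpow_sub {c : ℝ} (hc : c ≠ 0) (β t : ℝ) :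
    ∫ y in Ici (1 : ℝ), (c⁻¹ * y ^ β - t)⁻¹ = c * shiftedPowerIntegral β (1 - c * t) := by
  rw [shiftedPowerIntegral, ← integral_const_mul]
  congr 1
  ext y
  rw [show y ^ β - 1 + (1 - c * t) = c * (c⁻¹ * y ^ β - t) by field_simp; ring, mul_inv,
    ← mul_assoc, mul_inv_cancel₀ hc, one_mul]

lemma tendsto_neg_log_div_of_shiftedPowerIntegral_eq {β : ℝ} (hβ : 1 < β) {u : ℝ → ℝ}
    (hu : Tendsto u atTop (𝓝[>] 0))
    (hG : ∀ᶠ x in atTop, shiftedPowerIntegral β (u x) = x / (β - 1)) :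
    Tendsto (fun x => -log (u x) / x) atTop (𝓝 (β / (β - 1))) := by
  have hE : Tendsto (fun x => (shiftedPowerIntegral β (u x) + log (u x) / β) * x⁻¹) atTop (𝓝 0) :=
    (((shiftedPowerIntegral_add_log_div_isBigO hβ).comp_tendsto hu).mul
      (Asymptotics.isBigO_refl (fun x : ℝ => x⁻¹) atTop)).trans_tendsto
      (by simpa using tendsto_inv_atTop_zero)
  have hlim := (hE.const_mul β).const_sub (β / (β - 1))
  rw [mul_zero, sub_zero] at hlim
  refine hlim.congr' ?_
  filter_upwards [hG, eventually_gt_atTop 0] with x hx hx0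
  rw [hx]
  field_simp
  ring

theorem rate_function_asymptotics_at_infinity (β : ℝ) (hβ : 1 < β)
    (τ : ℝ → ℝ) (hτlt : ∀ x > 0, τ x < (β - 1)⁻¹)
    (hτ : ∀ x > 0, (∫ y in Set.Ici (1 : ℝ), ((β - 1)⁻¹ * y ^ β - τ x)⁻¹) = x)
    (I : ℝ → ℝ)
    (hI : ∀ x, I x = -((β - 1) * x * τ x) - Real.log (1 - (β - 1) * τ x)) :
    Tendsto (fun x => I x / x) atTop (𝓝 ((β - 1)⁻¹)) ∧
    Tendsto (fun x => x * I (x ^ (β - 1)) / x ^ β) atTop (𝓝 ((β - 1)⁻¹)) := by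
  have hβ1 : 0 < β - 1 := sub_pos.2 hβ
  set u : ℝ → ℝ := fun x => 1 - (β - 1) * τ x
  have hu_pos : ∀ᶠ x in atTop, 0 < u x := by
    filter_upwards [eventually_gt_atTop 0] with x hx
    have := mul_lt_mul_of_pos_left (hτlt x hx) hβ1
    rw [mul_inv_cancel₀ hβ1.ne'] at this
    exact sub_pos.2 this
  have hG : ∀ᶠ x in atTop, shiftedPowerIntegral β (u x) = x / (β - 1) := by
    filter_upwards [eventually_gt_atTop 0] with x hx
    rw [eq_div_iff hβ1.ne', mul_comm, ← integral_inv_inv_mul_rpow_sub hβ1.ne', hτ x hx]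
  have hu : Tendsto u atTop (𝓝[>] 0) :=
    (shiftedPowerIntegral_antitoneOn hβ).tendsto_nhdsGT_zero_of_tendsto_atTop hu_pos
      ((tendsto_id.atTop_div_const hβ1).congr' (hG.mono fun x hx => hx.symm))
  have hI_div : Tendsto (fun x => I x / x) atTop (𝓝 ((β - 1)⁻¹)) := by
    have hlim : (0 : ℝ) - 1 + β / (β - 1) = (β - 1)⁻¹ := by field_simp; ring
    refine hlim ▸ (((tendsto_nhds_of_tendsto_nhdsWithin hu).sub_const 1).add
      (tendsto_neg_log_div_of_shiftedPowerIntegral_eq hβ hu hG)).congr' ?_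
    filter_upwards [eventually_gt_atTop 0] with x hx
    rw [hI]
    field_simp
    ring
  refine ⟨hI_div, (hI_div.comp (tendsto_rpow_atTop hβ1)).congr' ?_⟩
  filter_upwards [eventually_gt_atTop 0] with x hx
  rw [Function.comp_apply, rpow_sub_one hx.ne', div_div_eq_mul_div, mul_comm]
end
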